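/- arXiv:2202.09829 — 7 statements merged into one kernel-verified Lean document; each statement's English description precedes it below -/
import Mathlib

section
/- Let R be a commutative ring, G a finite group whose order |G| is invertible in R, M a finitely generated projective R-module equipped with an R-linear G-action ρ : G →* (M ≃ₗ[R] M), T a commutative R-algebra, and N a T-module. Let G act on the symmetric algebra Sym_T(M^∨ ⊗_R N) by graded T-algebra automorphisms, via the contragredient action on M^∨ = Hom_R(M, R) (g · φ = φ ∘ ρ(g)⁻¹) and the trivial action on N, and set A := (Sym_T(M^∨ ⊗_R N))^G. If N is a finitely generated T-module, then A is a finitely generated (finite type) T-algebra. -/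
open TensorProduct

/-- The fixed subalgebra `Sᴳ` of a group `G` acting on a `T`-algebra `S` by `T`-algebra
automorphisms (the action being given by `ρ : G →* (S ≃ₐ[T] S)`). -/
def fixedSubalgebra (T S : Type*) [CommSemiring T] [Semiring S] [Algebra T S]
    {G : Type*} [Monoid G] (ρ : G →* (S ≃ₐ[T] S)) : Subalgebra T S where
  carrier := {a | ∀ g : G, ρ g a = a}
  mul_mem' := fun {a b} ha hb g => by rw [map_mul, ha g, hb g]
  add_mem' := fun {a b} ha hb g => by rw [map_add, ha g, hb g]
  algebraMap_mem' := fun r g => (ρ g).commutes r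

universe u

theorem fixedSubalgebra_finiteType {T S G : Type*} [CommRing T] [CommRing S] [Algebra T S]
    [Group G] [Fintype G] (ρS : G →* (S ≃ₐ[T] S))
    (hG : IsUnit ((Fintype.card G : ℕ) : T))
    (hS : Algebra.FiniteType T S) :
    Algebra.FiniteType T (fixedSubalgebra T S ρS) := by
  classical
  set A := fixedSubalgebra T S ρS with hAdef
  -- a `MulSemiringAction` of `G` on `S`
  letI : SMul G S := ⟨fun g s => ρS g s⟩
  have smul_def : ∀ (g : G) (s : S), g • s = ρS g s := fun _ _ => rfl
  letI : MulAction G S :=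
    { one_smul := fun s => by show ρS 1 s = s; rw [map_one]; rfl
      mul_smul := fun g h s => by
        show ρS (g * h) s = ρS g (ρS h s); rw [map_mul]; rfl }
  letI : DistribMulAction G S :=
    { smul_zero := fun g => map_zero (ρS g)
      smul_add := fun g => map_add (ρS g) }
  letI : MulSemiringAction G S :=
    { smul_one := fun g => map_one (ρS g)
      smul_mul := fun g => map_mul (ρS g) }
  -- every element of `S` is integral over `A`
  have hint : ∀ s : S, IsIntegral A s := by
    intro s
    refine ⟨(prodXSubSMul G S s).toSubring A.toSubring
      (fun c hc g => ?_ : ∀ c ∈ ((prodXSubSMul G S s).coeffs : Set S), ∀ g : G, ρS g c = c), ?_, ?_⟩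
    · obtain ⟨n, _, hn⟩ := Polynomial.mem_coeffs_iff.1 hc
      exact hn ▸ prodXSubSMul.coeff G S s g n
    · refine (Polynomial.monic_toSubring ..).mpr ?_
      exact prodXSubSMul.monic G S s
    · rw [← prodXSubSMul.eval G S s, Polynomial.eval₂_eq_eval_map]
      have : (algebraMap (↥A) S : ↥A →+* S) = A.toSubring.subtype := rfl
      rw [this]
      exact congrArg (Polynomial.eval s) (Polynomial.map_toSubring _ _ _)
  haveI : Algebra.IsIntegral (↥A) S := ⟨hint⟩
  haveI hTS : Algebra.FiniteType T S := hS
  haveI : Algebra.FiniteType (↥A) S :=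
    Algebra.FiniteType.of_restrictScalars_finiteType T (↥A) S
  haveI : Module.Finite (↥A) S := Algebra.IsIntegral.finite
  obtain ⟨B₀, hB₀fg, hB₀C⟩ :=
    exists_subalgebra_of_fg T (↥A) S hS.1 (Module.finite_def.mp inferInstance)
  -- the Reynolds operator
  set u := hG.unit with hu
  have hu1 : ((u⁻¹ : Tˣ) : T) * ((Fintype.card G : ℕ) : T) = 1 := by
    rw [← hG.unit_spec]; exact u.inv_mul
  set rey : S → S := fun s => ((u⁻¹ : Tˣ) : T) • ∑ g : G, ρS g s with hrey
  have rey_mem : ∀ s : S, rey s ∈ A := by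
    intro s h
    show ρS h (((u⁻¹ : Tˣ) : T) • ∑ g : G, ρS g s) = _
    rw [map_smul, map_sum]
    congr 1
    exact Fintype.sum_equiv (Equiv.mulLeft h) _ _ (fun g => by
      rw [← AlgEquiv.mul_apply, ← map_mul]; rfl)
  have rey_fix : ∀ a : S, a ∈ A → rey a = a := by
    intro a ha
    show ((u⁻¹ : Tˣ) : T) • ∑ g : G, ρS g a = a
    rw [Finset.sum_congr rfl (fun g _ => ha g), Finset.sum_const, Finset.card_univ,
      ← Nat.cast_smul_eq_nsmul T, smul_smul, hu1, one_smul]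
  have rey_mul : ∀ (a : S), a ∈ A → ∀ s : S, rey (a * s) = a * rey s := by
    intro a ha s
    show ((u⁻¹ : Tˣ) : T) • ∑ g : G, ρS g (a * s) = a * (((u⁻¹ : Tˣ) : T) • ∑ g : G, ρS g s)
    rw [mul_smul_comm, Finset.mul_sum]
    congr 1
    exact Finset.sum_congr rfl (fun g _ => by rw [map_mul, ha g])
  have rey_add : ∀ x y : S, rey (x + y) = rey x + rey y := by
    intro x y
    show ((u⁻¹ : Tˣ) : T) • ∑ g : G, ρS g (x + y) = _
    rw [← smul_add, ← Finset.sum_add_distrib]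
    congr 1
    exact Finset.sum_congr rfl (fun g _ => map_add _ _ _)
  -- `A` is a finite module over `B₀`
  haveI : Module.Finite (↥B₀) S := ⟨hB₀C⟩
  have halg : ∀ b : ↥B₀, (algebraMap (↥B₀) S b : S) = ((b : ↥A) : S) := fun b => rfl
  let r : S →ₗ[↥B₀] ↥A :=
    { toFun := fun s => ⟨rey s, rey_mem s⟩
      map_add' := fun x y => Subtype.ext (rey_add x y)
      map_smul' := fun b s => by
        refine Subtype.ext ?_
        show rey (b • s) = ((b • ⟨rey s, rey_mem s⟩ : ↥A) : S)
        rw [Algebra.smul_def, halg b, Algebra.smul_def]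
        exact rey_mul _ (((b : ↥A)).2) s }
  have hr : Function.Surjective r := fun a =>
    ⟨(a : S), Subtype.ext (rey_fix (a : S) a.2)⟩
  haveI : Module.Finite (↥B₀) (↥A) := Module.Finite.of_surjective r hr
  exact ⟨Algebra.fg_trans' ((Subalgebra.fg_top B₀).2 hB₀fg)
    (Subalgebra.fg_of_submodule_fg (Module.finite_def.mp inferInstance))⟩





/-- **Theorem 1.1, finitely generated case**, for a finite linearly reductive group (a finite
group `G` with `|G|` invertible in `R`):  let `M` be a finitely generated projective
`R`-module with a `G`-action, `T` an `R`-algebra, `N` a `T`-module.  Consider the `T`-module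
`M^∨ ⊗_R N`, with `T` acting through `N`, and let `S` be the symmetric algebra
`Sym_T (M^∨ ⊗_R N)` (specified via its universal property through the universal map `ι`),
with `G` acting on `S` through the contragredient action on `M^∨` and trivially on `N`.
If `N` is a finitely generated `T`-module, then `A := Sᴳ` is a finitely generated
(finite type) `T`-algebra. -/
theorem stmt1
    (R : Type u) [CommRing R]
    (G : Type u) [Group G] [Fintype G]
    (hG : IsUnit ((Fintype.card G : ℕ) : R))
    (M : Type u) [AddCommGroup M] [Module R M] [Module.Finite R M] [Module.Projective R M]
    (ρ : G →* (M ≃ₗ[R] M))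
    (T : Type u) [CommRing T] [Algebra R T]
    (N : Type u) [AddCommGroup N] [Module R N] [Module T N] [IsScalarTower R T N]
    -- the `T`-module structure on `M^∨ ⊗_R N`, acting through `N`
    [Module T (Module.Dual R M ⊗[R] N)] [IsScalarTower R T (Module.Dual R M ⊗[R] N)]
    (hsmul : ∀ (c : T) (φ : Module.Dual R M) (n : N), c • (φ ⊗ₜ[R] n) = φ ⊗ₜ[R] (c • n))
    -- `S` is the symmetric algebra of the `T`-module `M^∨ ⊗_R N`
    (S : Type u) [CommRing S] [Algebra T S]
    (ι : (Module.Dual R M ⊗[R] N) →ₗ[T] S)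
    (huniv : ∀ (B : Type u) [CommRing B] [Algebra T B]
      (f : (Module.Dual R M ⊗[R] N) →ₗ[T] B),
      ∃! g : S →ₐ[T] B, ∀ x, g (ι x) = f x)
    -- the `G`-action on `S = Sym_T (M^∨ ⊗_R N)`, contragredient on `M^∨`, trivial on `N`
    (ρS : G →* (S ≃ₐ[T] S))
    (hcompat : ∀ (g : G) (φ : Module.Dual R M) (n : N),
      ρS g (ι (φ ⊗ₜ[R] n)) = ι ((φ ∘ₗ (ρ g⁻¹).toLinearMap) ⊗ₜ[R] n))
    -- `N` is finitely generated over `T`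
    [Module.Finite T N] :
    Algebra.FiniteType T (fixedSubalgebra T S ρS) := by
  classical
  -- `|G|` is invertible in `T`
  have hGT : IsUnit ((Fintype.card G : ℕ) : T) := by
    have := hG.map (algebraMap R T)
    rwa [map_natCast] at this
  -- the module `M^∨ ⊗ N` is finitely generated over `T`
  obtain ⟨s, hs⟩ := Module.Finite.fg_top (R := R) (M := Module.Dual R M)
  obtain ⟨t, ht⟩ := Module.Finite.fg_top (R := T) (M := N)
  set Y : Finset (Module.Dual R M ⊗[R] N) :=
    (s ×ˢ t).image (fun p => p.1 ⊗ₜ[R] p.2) with hY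
  set P : Submodule T (Module.Dual R M ⊗[R] N) := Submodule.span T (Y : Set _) with hP
  have claim2 : ∀ n ∈ (t : Set N), ∀ (φ : Module.Dual R M),
      φ ∈ Submodule.span R (s : Set _) → φ ⊗ₜ[R] n ∈ P := by
    intro n hn φ hφ
    induction hφ using Submodule.span_induction with
    | mem φ hφ =>
      exact Submodule.subset_span (Finset.mem_coe.2 (Finset.mem_image.2
        ⟨(φ, n), Finset.mem_product.2 ⟨hφ, Finset.mem_coe.1 hn⟩, rfl⟩))
    | zero => rw [zero_tmul]; exact P.zero_mem
    | add x y hx hy ihx ihy => rw [add_tmul]; exact P.add_mem ihx ihy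
    | smul r φ hφ ih =>
      rw [← smul_tmul', ← algebraMap_smul T r (φ ⊗ₜ[R] n)]
      exact P.smul_mem _ ih
  have claim1 : ∀ (n : N), n ∈ Submodule.span T (t : Set N) → ∀ (φ : Module.Dual R M),
      φ ⊗ₜ[R] n ∈ P := by
    intro n hn
    induction hn using Submodule.span_induction with
    | mem n hn => exact fun φ => claim2 n hn φ (hs ▸ Submodule.mem_top)
    | zero => intro φ; rw [tmul_zero]; exact P.zero_mem
    | add x y hx hy ihx ihy => intro φ; rw [tmul_add]; exact P.add_mem (ihx φ) (ihy φ)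
    | smul c n hn ih => intro φ; rw [← hsmul c φ n]; exact P.smul_mem _ (ih φ)
  have hPtop : P = ⊤ := by
    rw [eq_top_iff]
    rintro x -
    induction x using TensorProduct.induction_on with
    | zero => exact P.zero_mem
    | tmul φ n => exact claim1 n (ht ▸ Submodule.mem_top) φ
    | add x y ihx ihy => exact P.add_mem ihx ihy
  -- `S` is generated as a `T`-algebra by the range of `ι`
  have hadj : Algebra.adjoin T (Set.range ι) = ⊤ := by
    obtain ⟨g, hg, -⟩ := huniv (↥(Algebra.adjoin T (Set.range ι)))
      (ι.codRestrict (Subalgebra.toSubmodule (Algebra.adjoin T (Set.range ι)))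
        (fun x => Algebra.subset_adjoin ⟨x, rfl⟩))
    obtain ⟨g₀, hg₀, hg₀u⟩ := huniv S ι
    have e1 : (Algebra.adjoin T (Set.range ι)).val.comp g = g₀ :=
      hg₀u _ (fun x => by simp [AlgHom.comp_apply, hg x]; rfl)
    have e2 : AlgHom.id T S = g₀ := hg₀u _ (fun x => rfl)
    rw [eq_top_iff]
    intro y _
    have : ((Algebra.adjoin T (Set.range ι)).val.comp g) y = (AlgHom.id T S) y := by
      rw [e1, e2]
    exact (show ((g y : S)) = y from this) ▸ (g y).2
  -- hence `S` is a finitely generated `T`-algebra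
  have hS : Algebra.FiniteType T S := by
    refine ⟨⟨Y.image ι, ?_⟩⟩
    rw [eq_top_iff, ← hadj]
    refine Algebra.adjoin_le ?_
    rintro _ ⟨x, rfl⟩
    have hx : x ∈ P := hPtop ▸ Submodule.mem_top
    have : ι x ∈ Submodule.span T (ι '' (Y : Set _)) := by
      rw [← Submodule.map_span]
      exact Submodule.mem_map_of_mem hx
    have hsub : Submodule.span T (ι '' (Y : Set _)) ≤
        Subalgebra.toSubmodule (Algebra.adjoin T ((Y.image ι : Finset S) : Set S)) := by
      refine Submodule.span_le.2 ?_
      rintro z ⟨w, hw, rfl⟩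
      exact Algebra.subset_adjoin (by
        rw [Finset.coe_image]; exact Set.mem_image_of_mem ι hw)
    exact hsub this
  exact fixedSubalgebra_finiteType ρS hGT hS
end

section
/- Let R be a commutative ring, G a finite group whose order |G| is invertible in R, M a finitely generated projective R-module equipped with an R-linear G-action ρ : G →* (M ≃ₗ[R] M), T a commutative R-algebra, and N a T-module. Let G act on the symmetric algebra Sym_T(M^∨ ⊗_R N) by graded T-algebra automorphisms, via the contragredient action on M^∨ = Hom_R(M, R) (g · φ = φ ∘ ρ(g)⁻¹) and the trivial action on N, and set A := (Sym_T(M^∨ ⊗_R N))^G. If N is a flat T-module, then A is flat as a T-module. -/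
open TensorProduct

universe u

section Aux
open MvPolynomial


section SymModel

variable (T : Type u) [CommRing T] (P : Type u) [AddCommGroup P] [Module T P]

/-- Generators of the linearity relations defining the symmetric algebra. -/
def symRels : Set (MvPolynomial P T) :=
  {q | (∃ p p' : P, q = X (p + p') - X p - X p') ∨
    ∃ (t : T) (p : P), q = X (t • p) - MvPolynomial.C t * X p}

noncomputable def symIdeal : Ideal (MvPolynomial P T) := Ideal.span (symRels T P)

/-- A concrete model of the symmetric algebra of `P` over `T`. -/
abbrev SymModel : Type u := MvPolynomial P T ⧸ symIdeal T P

/-- The canonical linear map `P → SymModel T P`. -/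
noncomputable def symMkX : P →ₗ[T] SymModel T P where
  toFun p := Ideal.Quotient.mkₐ T (symIdeal T P) (X p)
  map_add' p p' := by
    show Ideal.Quotient.mkₐ T (symIdeal T P) (X (p + p')) =
      Ideal.Quotient.mkₐ T (symIdeal T P) (X p) + Ideal.Quotient.mkₐ T (symIdeal T P) (X p')
    rw [← map_add, Ideal.Quotient.mkₐ_eq_mk, Ideal.Quotient.eq]
    have h : (X (p + p') : MvPolynomial P T) - (X p + X p') = X (p + p') - X p - X p' := by ring
    rw [h]
    exact Ideal.subset_span (Or.inl ⟨p, p', rfl⟩)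
  map_smul' t p := by
    show Ideal.Quotient.mkₐ T (symIdeal T P) (X (t • p)) =
      t • Ideal.Quotient.mkₐ T (symIdeal T P) (X p)
    rw [← map_smul, Ideal.Quotient.mkₐ_eq_mk, Ideal.Quotient.eq]
    have : X (t • p) - t • X p = X (t • p) - MvPolynomial.C t * X p := by
      rw [smul_eq_C_mul]
    rw [this]
    exact Ideal.subset_span (Or.inr ⟨t, p, rfl⟩)

variable {T P} in
/-- Universal property of `SymModel`, existence part. -/
noncomputable def symLift {B : Type*} [CommRing B] [Algebra T B] (f : P →ₗ[T] B) :
    SymModel T P →ₐ[T] B :=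
  Ideal.Quotient.liftₐ (symIdeal T P) (aeval fun p => f p) (by
    intro a ha
    refine Submodule.span_induction ?_ ?_ ?_ ?_ ha
    · rintro q (⟨p, p', rfl⟩ | ⟨t, p, rfl⟩) <;>
        simp [Algebra.smul_def, mul_comm]
    · simp
    · intro a b _ _ ha hb; rw [map_add, ha, hb, add_zero]
    · intro c a _ ha; rw [smul_eq_mul, map_mul, ha, mul_zero]
    )

variable {T P} in
@[simp] lemma symLift_mkX {B : Type*} [CommRing B] [Algebra T B] (f : P →ₗ[T] B) (p : P) :
    symLift f (symMkX T P p) = f p := by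
  simp [symLift, symMkX]
  exact aeval_X (fun p => f p) p

variable {T P} in
/-- Universal property of `SymModel`, uniqueness part. -/
lemma symModel_algHom_ext {B : Type*} [CommRing B] [Algebra T B]
    {g₁ g₂ : SymModel T P →ₐ[T] B} (h : ∀ p, g₁ (symMkX T P p) = g₂ (symMkX T P p)) :
    g₁ = g₂ := by
  have : g₁.comp (Ideal.Quotient.mkₐ T (symIdeal T P)) =
      g₂.comp (Ideal.Quotient.mkₐ T (symIdeal T P)) := MvPolynomial.algHom_ext fun p => h p
  ext x
  obtain ⟨y, rfl⟩ := Ideal.Quotient.mkₐ_surjective T (symIdeal T P) x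
  exact DFunLike.congr_fun this y

end SymModel

section SymFlat

variable {T : Type u} [CommRing T] {P : Type u} [AddCommGroup P] [Module T P]

lemma exists_z_of_mem_rels {g : MvPolynomial P T} (hg : g ∈ symRels T P) :
    ∃ z : P →₀ T, Finsupp.linearCombination T (id : P → P) z = 0 ∧
      Finsupp.linearCombination T (fun p => (X p : MvPolynomial P T)) z = g := by
  rcases hg with ⟨p, p', rfl⟩ | ⟨t, p, rfl⟩
  · refine ⟨Finsupp.single (p + p') 1 - Finsupp.single p 1 - Finsupp.single p' 1, ?_, ?_⟩ <;>
      simp [Finsupp.linearCombination_single]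
  · refine ⟨Finsupp.single (t • p) 1 - Finsupp.single p t, ?_, ?_⟩
    · simp
    · simp [Finsupp.linearCombination_single, smul_eq_C_mul]

lemma exists_rename_of_subset {σ₁ σ₂ : Finset P} (h : σ₁ ⊆ σ₂) (q' : MvPolynomial σ₁ T) :
    ∃ q'' : MvPolynomial (σ₂ : Set P) T,
      rename (Subtype.val) q'' = rename (Subtype.val) q' :=
  ⟨rename (fun u => ⟨u.1, h u.2⟩) q', by rw [rename_rename]; rfl⟩

lemma exists_common_rename {κ : Type u} [Fintype κ] (q : κ → MvPolynomial P T) :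
    ∃ σ : Finset P, ∀ k, ∃ q' : MvPolynomial (σ : Set P) T,
      rename (Subtype.val) q' = q k := by
  classical
  choose s q' hq' using fun k => exists_finset_rename (q k)
  refine ⟨Finset.univ.biUnion s, fun k => ?_⟩
  obtain ⟨q'', hq''⟩ := exists_rename_of_subset
    (Finset.subset_biUnion_of_mem s (Finset.mem_univ k)) (q' k)
  exact ⟨q'', by rw [hq'', ← hq' k]⟩

lemma lc_subtypeDomain {σ : Finset P} {V : Type*} [AddCommGroup V] [Module T V]
    (v : P → V) (z : P →₀ T) (hz : ∀ p ∈ z.support, p ∈ σ) :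
    Finsupp.linearCombination T (fun u : (σ : Set P) => v u.1)
      (z.subtypeDomain (· ∈ (σ : Set P))) = Finsupp.linearCombination T v z := by
  rw [Finsupp.linearCombination_apply, Finsupp.linearCombination_apply]
  exact Finsupp.sum_subtypeDomain_index (h := fun p t => t • v p) (fun p hp => hz p hp)

end SymFlat

section Main

variable (T : Type u) [CommRing T] (P : Type u) [AddCommGroup P] [Module T P]

set_option maxHeartbeats 1000000 in
theorem symModel_flat [Module.Flat T P] : Module.Flat T (SymModel T P) := by
  classical
  apply Module.Flat.of_forall_isTrivialRelation
  intro ι f s hsum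
  set Φ := Ideal.Quotient.mkₐ T (symIdeal T P) with hΦ
  -- lift the elements to polynomials
  have hsurj : ∀ i, ∃ w, Φ w = s i := fun i => Ideal.Quotient.mkₐ_surjective T _ (s i)
  choose w hw using hsurj
  -- the relation lands in the ideal
  have hmem : (∑ i, f i • w i) ∈ symIdeal T P := by
    rw [← Ideal.Quotient.eq_zero_iff_mem, ← Ideal.Quotient.mkₐ_eq_mk T, ← hΦ, map_sum]
    simp_rw [map_smul, hw]
    exact hsum
  -- write it as a combination of the generators
  rw [symIdeal, Ideal.span, Submodule.mem_span_set] at hmem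
  obtain ⟨c, hsupp, hc⟩ := hmem
  -- for each generator in the support, a "relation vector" in `P →₀ T`
  have hz : ∀ g : c.support, ∃ z : P →₀ T,
      Finsupp.linearCombination T (id : P → P) z = 0 ∧
        Finsupp.linearCombination T (fun p => (X p : MvPolynomial P T)) z = g.1 :=
    fun g => exists_z_of_mem_rels (hsupp g.2)
  choose z hz0 hzg using hz
  -- a common finite set of variables
  obtain ⟨σ₀, hσ₀⟩ := exists_common_rename (Sum.elim w (fun g : c.support => c g.1))
  set σ : Finset P := σ₀ ∪ c.support.attach.biUnion (fun g => (z ⟨g.1, g.2⟩).support) with hσ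
  have hσ₀σ : σ₀ ⊆ σ := Finset.subset_union_left
  have hzsupp : ∀ (g : c.support), ∀ p ∈ (z g).support, p ∈ σ := by
    intro g p hp
    refine Finset.mem_union_right _ (Finset.mem_biUnion.mpr ⟨⟨g.1, g.2⟩, ?_, ?_⟩)
    · exact Finset.mem_attach _ _
    · exact hp
  -- lifts of the polynomials
  have hWex : ∀ i, ∃ W : MvPolynomial (σ : Set P) T, rename Subtype.val W = w i := by
    intro i
    obtain ⟨q', hq'⟩ := hσ₀ (Sum.inl i)
    obtain ⟨q'', hq''⟩ := exists_rename_of_subset hσ₀σ q'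
    exact ⟨q'', by rw [hq'']; exact hq'⟩
  choose W hW using hWex
  have hCex : ∀ g : c.support, ∃ C : MvPolynomial (σ : Set P) T,
      rename Subtype.val C = c g.1 := by
    intro g
    obtain ⟨q', hq'⟩ := hσ₀ (Sum.inr g)
    obtain ⟨q'', hq''⟩ := exists_rename_of_subset hσ₀σ q'
    exact ⟨q'', by rw [hq'']; exact hq'⟩
  choose Cf hCf using hCex
  -- the degree-one embeddings and the evaluation maps
  set Lσ : ((σ : Set P) →₀ T) →ₗ[T] MvPolynomial (σ : Set P) T :=
    Finsupp.linearCombination T (fun u => X u) with hLσ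
  set y : ((σ : Set P) →₀ T) →ₗ[T] P :=
    Finsupp.linearCombination T (fun u => (u.1 : P)) with hy
  set zt : c.support → ((σ : Set P) →₀ T) :=
    (fun g => (z g).subtypeDomain (· ∈ (σ : Set P))) with hzt
  have hyzt : ∀ g, y (zt g) = 0 := by
    intro g
    rw [hy, hzt]
    rw [lc_subtypeDomain (fun p => p) (z g) (hzsupp g)]
    exact hz0 g
  have hrenzt : ∀ g, rename (Subtype.val) (Lσ (zt g)) = g.1 := by
    intro g
    have h1 : rename (Subtype.val) (Lσ (zt g)) =
        (rename (R := T) (Subtype.val : ↥(σ : Set P) → P)).toLinearMap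
          (Finsupp.linearCombination T (fun u : (σ : Set P) => X u) (zt g)) := rfl
    rw [h1, LinearMap.map_finsupp_linearCombination]
    simp only [Function.comp_def, AlgHom.toLinearMap_apply, rename_X]
    rw [hzt, lc_subtypeDomain (fun p => (X p : MvPolynomial P T)) (z g) (hzsupp g)]
    exact hzg g
  -- the key identity at the finite free stage
  have hkey : ∑ i, f i • W i = ∑ g ∈ c.support.attach, Cf g * Lσ (zt g) := by
    apply rename_injective (R := T) Subtype.val Subtype.val_injective
    rw [map_sum, map_sum]
    simp_rw [map_smul, hW, map_mul, hCf, hrenzt]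
    rw [← hc, Finsupp.sum, ← Finset.sum_attach c.support (fun g => c g • g)]
    simp_rw [smul_eq_mul]
  -- use flatness of `P` to kill the relation vectors
  set K : Type u := ((c.support : Type u) →₀ T) with hK
  set f₀ : K →ₗ[T] ((σ : Set P) →₀ T) := Finsupp.linearCombination T zt with hf₀
  have hcomp : y ∘ₗ f₀ = 0 := by
    apply Finsupp.lhom_ext
    intro g t
    simp only [LinearMap.comp_apply, hf₀, Finsupp.linearCombination_single,
      LinearMap.zero_apply, map_smul, hyzt, smul_zero]
  obtain ⟨κ, a, y', hfac, ha⟩ :=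
    Module.Flat.exists_factorization_of_comp_eq_zero_of_free (R := T) (M := P) hcomp
  have hazt : ∀ g, a (zt g) = 0 := by
    intro g
    have := LinearMap.congr_fun ha (Finsupp.single g 1)
    rw [LinearMap.comp_apply, LinearMap.zero_apply, hf₀,
      Finsupp.linearCombination_single, one_smul] at this
    exact this
  -- transport to the new free stage
  set Lκ : (Fin κ →₀ T) →ₗ[T] MvPolynomial (Fin κ) T :=
    Finsupp.linearCombination T (fun u => X u) with hLκ
  set A : MvPolynomial (σ : Set P) T →ₐ[T] MvPolynomial (Fin κ) T :=
    aeval (fun u => Lκ (a (Finsupp.single u 1))) with hA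
  have hAL : ∀ zz, A (Lσ zz) = Lκ (a zz) := by
    intro zz
    have : A.toLinearMap ∘ₗ Lσ = Lκ ∘ₗ a := by
      apply Finsupp.lhom_ext
      intro u t
      have hsing : Finsupp.single u t = t • Finsupp.single u 1 := by
        rw [Finsupp.smul_single, smul_eq_mul, mul_one]
      simp only [LinearMap.comp_apply, hLσ, Finsupp.linearCombination_single, hsing,
        map_smul, AlgHom.toLinearMap_apply, one_smul]
      rw [hA, aeval_X]
    exact LinearMap.congr_fun this zz
  have h0 : ∑ i, f i • A (W i) = 0 := by
    have := congrArg A hkey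
    rw [map_sum, map_sum] at this
    simp_rw [map_smul] at this
    rw [this]
    refine Finset.sum_eq_zero fun g _ => ?_
    rw [map_mul, hAL, hazt, map_zero, mul_zero]
  -- trivialize the relation in the free module `MvPolynomial κ T`
  obtain ⟨κ', b, Y, hY, hb⟩ :=
    Module.Flat.isTrivialRelation_of_sum_smul_eq_zero (R := T) (M := MvPolynomial (Fin κ) T) h0
  -- map back down to the symmetric algebra
  set Ψ : MvPolynomial (Fin κ) T →ₐ[T] SymModel T P :=
    aeval (fun u => symMkX T P (y' (Finsupp.single u 1))) with hΨ
  have hΨL : ∀ zz, Ψ (Lκ zz) = symMkX T P (y' zz) := by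
    intro zz
    have : Ψ.toLinearMap ∘ₗ Lκ = (symMkX T P) ∘ₗ y' := by
      apply Finsupp.lhom_ext
      intro u t
      have hsing : Finsupp.single u t = t • Finsupp.single u 1 := by
        rw [Finsupp.smul_single, smul_eq_mul, mul_one]
      simp only [LinearMap.comp_apply, hLκ, Finsupp.linearCombination_single, hsing,
        map_smul, AlgHom.toLinearMap_apply, one_smul]
      rw [hΨ, aeval_X]
    exact LinearMap.congr_fun this zz
  have hcomm : ∀ q : MvPolynomial (σ : Set P) T, Ψ (A q) = Φ (rename Subtype.val q) := by
    have : Ψ.comp A = Φ.comp (rename (Subtype.val)) := by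
      apply MvPolynomial.algHom_ext
      intro u
      rw [AlgHom.comp_apply, AlgHom.comp_apply, hA, aeval_X, hΨL, rename_X]
      have : y' (a (Finsupp.single u 1)) = y (Finsupp.single u 1) := by
        rw [hfac]; rfl
      rw [this, hy, Finsupp.linearCombination_single, one_smul]
      rfl
    exact fun q => DFunLike.congr_fun this q
  have hs : ∀ i, s i = ∑ j, b i j • Ψ (Y j) := by
    intro i
    have hYi : A (W i) = ∑ j, b i j • Y j := hY i
    rw [← hw i, ← hW i, ← hcomm, hYi, map_sum]
    simp_rw [map_smul]
  exact ⟨κ', b, fun j => Ψ (Y j), hs, hb⟩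

end Main

section Retract

variable {T : Type u} [CommRing T]

/-- Flatness of a finite power of a flat module. -/
lemma flat_pi_of_flat (n : ℕ) (N : Type u) [AddCommGroup N] [Module T N] [Module.Flat T N] :
    Module.Flat T (Fin n → N) :=
  Module.Flat.of_linearEquiv
    (DirectSum.linearEquivFunOnFintype T (Fin n) (fun _ => N)).symm

end Retract

section Stmt3Setup

variable (R : Type u) [CommRing R]
    (M : Type u) [AddCommGroup M] [Module R M] [Module.Finite R M] [Module.Projective R M]
    (T : Type u) [CommRing T] [Algebra R T]
    (N : Type u) [AddCommGroup N] [Module R N] [Module T N] [IsScalarTower R T N]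
    [Module T (Module.Dual R M ⊗[R] N)] [IsScalarTower R T (Module.Dual R M ⊗[R] N)]

/-- The tensor product `M^∨ ⊗_R N`, with `T` acting through `N`, is a flat `T`-module. -/
theorem dualTensorFlat
    (hsmul : ∀ (c : T) (φ : Module.Dual R M) (n : N), c • (φ ⊗ₜ[R] n) = φ ⊗ₜ[R] (c • n))
    [Module.Flat T N] : Module.Flat T (Module.Dual R M ⊗[R] N) := by
  classical
  have hcm : ∀ (r : R) (c : T) (x : N), r • c • x = c • r • x := by
    intro r c x
    rw [← algebraMap_smul T r x, ← algebraMap_smul T r (c • x), smul_smul, smul_smul, mul_comm]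
  obtain ⟨n, π, hπ⟩ := Module.Finite.exists_fin' R M
  obtain ⟨sec, hsec⟩ := Module.projective_lifting_property π LinearMap.id hπ
  set m : Fin n → M := fun j => π (Pi.single j 1) with hm
  set ψ : Fin n → Module.Dual R M := fun j => (LinearMap.proj j).comp sec with hψ
  -- the section `u : M^∨ ⊗ N → (Fin n → N)`
  set u₀ : Module.Dual R M ⊗[R] N →ₗ[R] (Fin n → N) :=
    TensorProduct.lift
      { toFun := fun φ =>
          { toFun := fun x => fun j => φ (m j) • x
            map_add' := fun x x' => by
              funext j
              show φ (m j) • (x + x') = φ (m j) • x + φ (m j) • x'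
              rw [smul_add]
            map_smul' := fun r x => by
              funext j
              show φ (m j) • (r • x) = r • (φ (m j) • x)
              exact smul_comm _ _ _ }
        map_add' := fun φ φ' => by
          ext x j
          show (φ + φ') (m j) • x = φ (m j) • x + φ' (m j) • x
          rw [LinearMap.add_apply, add_smul]
        map_smul' := fun r φ => by
          ext x j
          show (r • φ) (m j) • x = r • (φ (m j) • x)
          rw [LinearMap.smul_apply, smul_eq_mul, mul_smul] } with hu₀
  have hu₀t : ∀ (φ : Module.Dual R M) (x : N), u₀ (φ ⊗ₜ[R] x) = fun j => φ (m j) • x :=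
    fun φ x => rfl
  have hu₀smul : ∀ (c : T) (v : Module.Dual R M ⊗[R] N), u₀ (c • v) = c • u₀ v := by
    intro c v
    induction v using TensorProduct.induction_on with
    | zero => rw [smul_zero, map_zero, smul_zero]
    | tmul φ x =>
        rw [hsmul, hu₀t, hu₀t]
        funext j
        show φ (m j) • c • x = c • (φ (m j) • x)
        exact hcm _ _ _
    | add v w hv hw => rw [smul_add, map_add, hv, hw, map_add, smul_add]
  set u : Module.Dual R M ⊗[R] N →ₗ[T] (Fin n → N) :=
    { toFun := u₀
      map_add' := u₀.map_add
      map_smul' := hu₀smul } with hu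
  -- the retraction `v : (Fin n → N) → M^∨ ⊗ N`
  set tm : Module.Dual R M → (N →ₗ[T] Module.Dual R M ⊗[R] N) := fun φ =>
    { toFun := fun x => φ ⊗ₜ[R] x
      map_add' := fun x x' => TensorProduct.tmul_add φ x x'
      map_smul' := fun c x => (hsmul c φ x).symm } with htm
  set v : (Fin n → N) →ₗ[T] Module.Dual R M ⊗[R] N :=
    ∑ j, (tm (ψ j)).comp (LinearMap.proj j) with hv
  -- `v ∘ u = id`
  have hvu : v.comp u = LinearMap.id := by
    ext x
    show v (u x) = x
    induction x using TensorProduct.induction_on with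
    | zero => rw [map_zero, map_zero]
    | tmul φ x =>
        have h1 : u (φ ⊗ₜ[R] x) = fun j => φ (m j) • x := rfl
        rw [h1, hv, LinearMap.sum_apply]
        have h2 : ∀ j : Fin n, ((tm (ψ j)).comp (LinearMap.proj j)) (fun j => φ (m j) • x) =
            (φ (m j) • ψ j) ⊗ₜ[R] x := by
          intro j
          show ψ j ⊗ₜ[R] (φ (m j) • x) = (φ (m j) • ψ j) ⊗ₜ[R] x
          rw [TensorProduct.smul_tmul]
        rw [Finset.sum_congr rfl fun j _ => h2 j, ← TensorProduct.sum_tmul]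
        congr 1
        -- `∑ j, φ (m j) • ψ j = φ`
        ext x'
        simp only [LinearMap.coe_sum, Finset.sum_apply, LinearMap.smul_apply]
        have h4 : π (sec x') = x' := by simpa using LinearMap.congr_fun hsec x'
        have h6 : (∑ j, Pi.single j (sec x' j) : Fin n → R) = sec x' :=
          Finset.univ_sum_single (sec x')
        have h5 : ∑ j, sec x' j • m j = x' := by
          have h9 : ∀ j : Fin n, sec x' j • m j = π (Pi.single j (sec x' j)) := by
            intro j
            rw [hm, ← map_smul]
            congr 1
            funext k
            simp [Pi.single_apply, smul_eq_mul, mul_ite, mul_one, mul_zero]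
          simp_rw [h9]
          rw [← map_sum, h6, h4]
        have h8 : ∀ j : Fin n, ψ j x' = sec x' j := fun j => rfl
        calc ∑ j, φ (m j) • ψ j x'
            = ∑ j, sec x' j • φ (m j) := by
              refine Finset.sum_congr rfl fun j _ => ?_
              rw [h8 j, smul_eq_mul, smul_eq_mul, mul_comm]
          _ = φ (∑ j, sec x' j • m j) := by rw [map_sum]; simp_rw [map_smul]
          _ = φ x' := by rw [h5]
    | add a b ha hb => rw [map_add, map_add, ha, hb]
  have : Module.Flat T (Fin n → N) := flat_pi_of_flat n N
  exact Module.Flat.of_retract u v hvu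

end Stmt3Setup


end Aux


/-- **Theorem 1.1, flat case**, for a finite linearly reductive group (a finite
group `G` with `|G|` invertible in `R`):  let `M` be a finitely generated projective
`R`-module with a `G`-action, `T` an `R`-algebra, `N` a `T`-module.  Consider the `T`-module
`M^∨ ⊗_R N`, with `T` acting through `N`, and let `S` be the symmetric algebra
`Sym_T (M^∨ ⊗_R N)` (specified via its universal property through the universal map `ι`),
with `G` acting on `S` through the contragredient action on `M^∨` and trivially on `N`.
If `N` is a flat `T`-module, then `A := Sᴳ` is flat as a `T`-module. -/
theorem stmt3
    (R : Type u) [CommRing R]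
    (G : Type u) [Group G] [Fintype G]
    (hG : IsUnit ((Fintype.card G : ℕ) : R))
    (M : Type u) [AddCommGroup M] [Module R M] [Module.Finite R M] [Module.Projective R M]
    (ρ : G →* (M ≃ₗ[R] M))
    (T : Type u) [CommRing T] [Algebra R T]
    (N : Type u) [AddCommGroup N] [Module R N] [Module T N] [IsScalarTower R T N]
    -- the `T`-module structure on `M^∨ ⊗_R N`, acting through `N`
    [Module T (Module.Dual R M ⊗[R] N)] [IsScalarTower R T (Module.Dual R M ⊗[R] N)]
    (hsmul : ∀ (c : T) (φ : Module.Dual R M) (n : N), c • (φ ⊗ₜ[R] n) = φ ⊗ₜ[R] (c • n))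
    -- `S` is the symmetric algebra of the `T`-module `M^∨ ⊗_R N`
    (S : Type u) [CommRing S] [Algebra T S]
    (ι : (Module.Dual R M ⊗[R] N) →ₗ[T] S)
    (huniv : ∀ (B : Type u) [CommRing B] [Algebra T B]
      (f : (Module.Dual R M ⊗[R] N) →ₗ[T] B),
      ∃! g : S →ₐ[T] B, ∀ x, g (ι x) = f x)
    -- the `G`-action on `S = Sym_T (M^∨ ⊗_R N)`, contragredient on `M^∨`, trivial on `N`
    (ρS : G →* (S ≃ₐ[T] S))
    (hcompat : ∀ (g : G) (φ : Module.Dual R M) (n : N),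
      ρS g (ι (φ ⊗ₜ[R] n)) = ι ((φ ∘ₗ (ρ g⁻¹).toLinearMap) ⊗ₜ[R] n))
    -- `N` is flat over `T`
    [Module.Flat T N] :
    Module.Flat T (fixedSubalgebra T S ρS) := by
  classical
  -- Step 1: `S` is flat, being isomorphic to the symmetric algebra of the flat module `P`.
  have hPflat : Module.Flat T (Module.Dual R M ⊗[R] N) := dualTensorFlat R M T N hsmul
  obtain ⟨g, hg, -⟩ := huniv (SymModel T (Module.Dual R M ⊗[R] N))
    (symMkX T (Module.Dual R M ⊗[R] N))
  set h : SymModel T (Module.Dual R M ⊗[R] N) →ₐ[T] S := symLift ι with hh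
  have hgh : h.comp g = AlgHom.id T S := by
    obtain ⟨g₀, -, hg₀uniq⟩ := huniv S ι
    have h1 := hg₀uniq (h.comp g) (fun x => by rw [AlgHom.comp_apply, hg, hh, symLift_mkX])
    have h2 := hg₀uniq (AlgHom.id T S) (fun x => rfl)
    rw [h1, h2]
  have hhg : g.comp h = AlgHom.id T (SymModel T (Module.Dual R M ⊗[R] N)) := by
    apply symModel_algHom_ext
    intro p
    rw [AlgHom.comp_apply, hh, symLift_mkX, hg, AlgHom.id_apply]
  have hSymFlat : Module.Flat T (SymModel T (Module.Dual R M ⊗[R] N)) :=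
    symModel_flat T (Module.Dual R M ⊗[R] N)
  have hSflat : Module.Flat T S :=
    Module.Flat.of_linearEquiv
      (AlgEquiv.ofAlgHom g h hhg hgh).toLinearEquiv
  -- Step 2: the fixed subalgebra is a retract of `S` via the Reynolds operator.
  have hcard : IsUnit ((Fintype.card G : ℕ) : T) := by
    have := hG.map (algebraMap R T)
    rwa [map_natCast] at this
  set uu : Tˣ := hcard.unit with huu
  set E : S →ₗ[T] S := ∑ k : G, (ρS k).toLinearMap with hE
  set pr : S →ₗ[T] S := ((uu⁻¹ : Tˣ) : T) • E with hpr
  have hEfix : ∀ (g₀ : G) (x : S), ρS g₀ (E x) = E x := by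
    intro g₀ x
    rw [hE, LinearMap.sum_apply, map_sum]
    refine Fintype.sum_equiv (Equiv.mulLeft g₀) _ _ fun k => ?_
    rw [AlgEquiv.toLinearMap_apply, AlgEquiv.toLinearMap_apply]
    rw [Equiv.coe_mulLeft, map_mul, AlgEquiv.mul_apply]
  have hprmem : ∀ x : S, ∀ g₀ : G, ρS g₀ (pr x) = pr x := by
    intro x g₀
    rw [hpr, LinearMap.smul_apply, map_smul, hEfix]
  set i : (fixedSubalgebra T S ρS) →ₗ[T] S := (fixedSubalgebra T S ρS).val.toLinearMap with hi
  set prA : S →ₗ[T] (fixedSubalgebra T S ρS) :=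
    { toFun := fun x => ⟨pr x, hprmem x⟩
      map_add' := fun x y => Subtype.ext (pr.map_add x y)
      map_smul' := fun c x => Subtype.ext (pr.map_smul c x) } with hprA
  have hretract : prA.comp i = LinearMap.id := by
    ext a
    show pr (a : S) = (a : S)
    have hafix : ∀ k : G, ρS k (a : S) = (a : S) := a.2
    have h1 : E (a : S) = (Fintype.card G : ℕ) • (a : S) := by
      rw [hE, LinearMap.sum_apply]
      simp only [AlgEquiv.toLinearMap_apply]
      rw [Finset.sum_congr rfl fun k _ => hafix k, Finset.sum_const, Finset.card_univ]
    rw [hpr, LinearMap.smul_apply, h1, ← Nat.cast_smul_eq_nsmul T, smul_smul,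
      ← IsUnit.unit_spec hcard, ← huu, Units.inv_mul, one_smul]
  exact Module.Flat.of_retract i prA hretract
end

section
/- Let R be a commutative ring and A a graded R-algebra (with grading 𝒜 and 𝒜 0 equal to the image of R). If A is a finitely presented R-algebra, then there exists an integer t ≥ 1 such that A is a t-pgg algebra. -/
/-!
Partially generated graded algebras (pgg).

A graded `R`-algebra `A` (grading `𝒜 : ℕ → Submodule R A`) is `t`-pgg if the evaluation
map from the (weighted) polynomial ring on variables `X_(i,a)` (`1 ≤ i ≤ t`, `a ∈ 𝒜 i`,
`X_(i,a)` of weight `i`) sending `X_(i,a) ↦ a` is surjective and its kernel is generated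
by weighted-homogeneous polynomials of weighted degree at most `t`.
-/

open MvPolynomial

/-- The variables `X_(i,a)` for `1 ≤ i ≤ t` and `a ∈ 𝒜 i`. -/
abbrev PggVars {R A : Type*} [CommRing R] [CommRing A] [Algebra R A]
    (𝒜 : ℕ → Submodule R A) (t : ℕ) : Type _ :=
  Σ i : Set.Icc 1 t, 𝒜 (i : ℕ)

/-- The weight of the variable `X_(i,a)` is `i`. -/
def pggWeight {R A : Type*} [CommRing R] [CommRing A] [Algebra R A]
    (𝒜 : ℕ → Submodule R A) (t : ℕ) : PggVars 𝒜 t → ℕ :=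
  fun v => (v.1 : ℕ)

/-- The evaluation homomorphism `ev_t`, sending `X_(i,a)` to `a`. -/
noncomputable def pggEval {R A : Type*} [CommRing R] [CommRing A] [Algebra R A]
    (𝒜 : ℕ → Submodule R A) (t : ℕ) :
    MvPolynomial (PggVars 𝒜 t) R →ₐ[R] A :=
  aeval fun v => (v.2 : A)

/-- `A` is a `t`-partially generated graded (`t`-pgg) `R`-algebra: `ev_t` is surjective and
its kernel is generated by weighted-homogeneous polynomials of weighted degree at most `t`. -/
def IsPgg {R A : Type*} [CommRing R] [CommRing A] [Algebra R A]
    (𝒜 : ℕ → Submodule R A) (t : ℕ) : Prop :=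
  Function.Surjective (pggEval 𝒜 t) ∧
  ∃ S : Set (MvPolynomial (PggVars 𝒜 t) R),
    (∀ p ∈ S, ∃ n ≤ t, p.IsWeightedHomogeneous (pggWeight 𝒜 t) n) ∧
    RingHom.ker (pggEval 𝒜 t) = Ideal.span S

/-!
Taking the homogeneous components of finitely many algebra generators gives a surjection
`ψ : R[Y_1, …, Y_k] → A` with each `Y_j` of positive weight and sent to a homogeneous element
(degree-`0` components lie in the image of `R`). Since `A` is finitely presented, `ker ψ` is
finitely generated, and since `ψ` is graded, the weighted-homogeneous components of these
generators still generate it; they have bounded degree. For `t` beyond all these degrees, each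
variable `X_(i,a)` of `ev_t` is congruent to a homogeneous lift of `a` modulo the relation
`X_(i,a) - lift`, of weight `i`; these relations together with those of `ψ` generate `ker ev_t`.
-/

open DirectSum

namespace MvPolynomial

section Rename

variable {R σ τ M : Type*} [CommSemiring R] [AddCommMonoid M]

theorem IsWeightedHomogeneous.rename {w : τ → M} {f : σ → τ} {p : MvPolynomial σ R} {n : M}
    (hp : p.IsWeightedHomogeneous (w ∘ f) n) : (rename f p).IsWeightedHomogeneous w n := by
  intro d hd
  obtain ⟨u, rfl, hu⟩ := coeff_rename_ne_zero f p d hd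
  rw [← hp hu, Finsupp.weight_apply, Finsupp.weight_apply]
  exact Finsupp.sum_mapDomain_index (fun _ => zero_smul ℕ _) fun _ _ _ => add_smul _ _ _

end Rename

section Graded

variable {R A σ M : Type*} [CommSemiring R] [CommSemiring A] [Algebra R A]
  [AddCommMonoid M] [DecidableEq M] (𝒜 : M → Submodule R A) [GradedAlgebra 𝒜]
  {w : σ → M} {a : σ → A}

theorem aeval_monomial_mem_graded (ha : ∀ i, a i ∈ 𝒜 (w i)) (d : σ →₀ ℕ) (r : R) :
    aeval a (monomial d r) ∈ 𝒜 (Finsupp.weight w d) := by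
  rw [aeval_monomial, ← Algebra.smul_def, Finsupp.weight_apply, Finsupp.prod]
  exact Submodule.smul_mem _ r (SetLike.prod_pow_mem_graded 𝒜 w a d fun i _ => ha i)

theorem aeval_weightedHomogeneousComponent (ha : ∀ i, a i ∈ 𝒜 (w i)) (n : M)
    (p : MvPolynomial σ R) :
    aeval a (weightedHomogeneousComponent w n p) = decompose 𝒜 (aeval a p) n := by
  classical
  conv_rhs => rw [p.as_sum]
  rw [weightedHomogeneousComponent_apply, map_sum, map_sum, decompose_sum,
    DFinsupp.finsetSum_apply, Submodule.coe_sum, Finset.sum_filter]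
  refine Finset.sum_congr rfl fun d _ => ?_
  have hmem := aeval_monomial_mem_graded 𝒜 ha d (coeff d p)
  split_ifs with hd
  · rw [← hd, decompose_of_mem_same 𝒜 hmem]
  · rw [decompose_of_mem_ne 𝒜 hmem hd]

theorem aeval_weightedHomogeneousComponent_of_mem (ha : ∀ i, a i ∈ 𝒜 (w i)) {n : M}
    {p : MvPolynomial σ R} (hp : aeval a p ∈ 𝒜 n) :
    aeval a (weightedHomogeneousComponent w n p) = aeval a p := by
  rw [aeval_weightedHomogeneousComponent 𝒜 ha, decompose_of_mem_same 𝒜 hp]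

end Graded

section Kernel

variable {R A σ τ : Type*} [CommRing R] [CommRing A] [Algebra R A]

theorem sub_rename_bind₁_mem_span (ι : σ → τ) (Q : τ → MvPolynomial σ R)
    (p : MvPolynomial τ R) :
    p - rename ι (bind₁ Q p) ∈ Ideal.span (Set.range fun v => X v - rename ι (Q v)) := by
  set J := Ideal.span (Set.range fun v => X v - rename ι (Q v))
  have hext :
      Ideal.Quotient.mkₐ R J = (Ideal.Quotient.mkₐ R J).comp ((rename ι).comp (bind₁ Q)) :=
    algHom_ext fun v => by
      simpa [Ideal.Quotient.mkₐ_eq_mk, Ideal.Quotient.eq] using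
        (Ideal.subset_span ⟨v, rfl⟩ : X v - rename ι (Q v) ∈ J)
  simpa [Ideal.Quotient.mkₐ_eq_mk, Ideal.Quotient.eq] using congr($hext p)

theorem ker_eq_span_of_ker_comp_rename (φ : MvPolynomial τ R →ₐ[R] A) (ι : σ → τ)
    (Q : τ → MvPolynomial σ R) (hQ : ∀ v, φ (rename ι (Q v)) = φ (X v))
    {G : Set (MvPolynomial σ R)} (hG : RingHom.ker (φ.comp (rename ι)) = Ideal.span G) :
    RingHom.ker φ = Ideal.span (rename ι '' G ∪ Set.range fun v => X v - rename ι (Q v)) := by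
  have hle : Ideal.span (Set.range fun v => X v - rename ι (Q v)) ≤ RingHom.ker φ := by
    rw [Ideal.span_le]
    rintro _ ⟨v, rfl⟩
    simp [hQ]
  refine le_antisymm (fun p hp => ?_) ?_
  · have hsub := sub_rename_bind₁_mem_span ι Q p
    have hbind : bind₁ Q p ∈ Ideal.span G := by
      rw [← hG, RingHom.mem_ker, AlgHom.comp_apply]
      have := RingHom.mem_ker.1 (hle hsub)
      rwa [map_sub, RingHom.mem_ker.1 hp, zero_sub, neg_eq_zero] at this
    have hrename : rename ι (bind₁ Q p) ∈ Ideal.span (rename ι '' G) := by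
      rw [← Ideal.map_span]
      exact Ideal.mem_map_of_mem _ hbind
    rw [← sub_add_cancel p (rename ι (bind₁ Q p)), Ideal.span_union]
    exact Ideal.add_mem _ (Ideal.mem_sup_right hsub) (Ideal.mem_sup_left hrename)
  · rw [Ideal.span_union, sup_le_iff, ← Ideal.map_span, ← hG, Ideal.map_le_iff_le_comap]
    refine ⟨fun g hg => ?_, hle⟩
    simpa using hg

end Kernel

section HomogeneousKernel

variable {R A σ : Type*} [CommRing R] [CommRing A] [Algebra R A]
  (𝒜 : ℕ → Submodule R A) [GradedAlgebra 𝒜] {w : σ → ℕ} {a : σ → A}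

theorem ker_aeval_eq_span_weightedHomogeneousComponent (ha : ∀ i, a i ∈ 𝒜 (w i))
    {G : Set (MvPolynomial σ R)} (hG : RingHom.ker (aeval a) = Ideal.span G) :
    RingHom.ker (aeval a) = Ideal.span (⋃ m, weightedHomogeneousComponent w m '' G) := by
  refine le_antisymm (hG.le.trans (Ideal.span_le.2 fun f hf => ?_)) (Ideal.span_le.2 ?_)
  · rw [SetLike.mem_coe, ← sum_weightedHomogeneousComponent w f,
      finsum_eq_sum _ (weightedHomogeneousComponent_finsupp f)]
    exact Ideal.sum_mem _ fun m _ =>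
      Ideal.subset_span (Set.mem_iUnion.2 ⟨m, Set.mem_image_of_mem _ hf⟩)
  · simp only [Set.iUnion_subset_iff, Set.image_subset_iff]
    intro m f hf
    have hf0 : aeval a f = 0 := RingHom.mem_ker.1 (hG ▸ Ideal.subset_span hf)
    rw [Set.mem_preimage, SetLike.mem_coe, RingHom.mem_ker,
      aeval_weightedHomogeneousComponent_of_mem 𝒜 ha (hf0 ▸ zero_mem (𝒜 m)), hf0]

theorem exists_isWeightedHomogeneous_span_ker_aeval [Finite σ] [Algebra.FinitePresentation R A]
    (ha : ∀ i, a i ∈ 𝒜 (w i)) (hsurj : Function.Surjective (aeval a : MvPolynomial σ R →ₐ[R] A)) :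
    ∃ E : ℕ, ∃ G : Set (MvPolynomial σ R), (∀ g ∈ G, ∃ n ≤ E, g.IsWeightedHomogeneous w n) ∧
      RingHom.ker (aeval a) = Ideal.span G := by
  obtain ⟨F, hF⟩ := Algebra.FinitePresentation.ker_fG_of_surjective _ hsurj
  refine ⟨F.sup (weightedTotalDegree w), _, ?_,
    ker_aeval_eq_span_weightedHomogeneousComponent 𝒜 ha hF.symm⟩
  simp only [Set.mem_iUnion, Set.mem_image]
  rintro _ ⟨m, f, hf, rfl⟩
  by_cases hm : m ≤ F.sup (weightedTotalDegree w)
  · exact ⟨m, hm, weightedHomogeneousComponent_isWeightedHomogeneous m f⟩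
  · rw [weightedHomogeneousComponent_eq_zero m f
      ((Finset.le_sup hf).trans_lt (not_le.1 hm))]
    exact ⟨0, Nat.zero_le _, isWeightedHomogeneous_zero R w 0⟩

end HomogeneousKernel

end MvPolynomial

open MvPolynomial

section Pgg

variable {R A : Type*} [CommRing R] [CommRing A] [Algebra R A]
  (𝒜 : ℕ → Submodule R A) [GradedAlgebra 𝒜]

theorem exists_finset_pos_degree_adjoin_eq_top
    (h0 : 𝒜 0 = LinearMap.range (Algebra.linearMap R A)) [Algebra.FiniteType R A] :
    ∃ s : Finset (ℕ × A), (∀ x ∈ s, 0 < x.1 ∧ x.2 ∈ 𝒜 x.1) ∧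
      Algebra.adjoin R (Prod.snd '' (s : Set (ℕ × A))) = ⊤ := by
  classical
  obtain ⟨T, hT⟩ := Algebra.FiniteType.out (R := R) (A := A)
  refine ⟨T.biUnion fun x => ((decompose 𝒜 x).support.filter (0 < ·)).image
    fun i => (i, (decompose 𝒜 x i : A)), ?_, ?_⟩
  · simp only [Finset.mem_biUnion, Finset.mem_image, Finset.mem_filter]
    rintro _ ⟨x, -, i, ⟨-, hi⟩, rfl⟩
    exact ⟨hi, SetLike.coe_mem _⟩
  · rw [eq_top_iff, ← hT, Algebra.adjoin_le_iff]
    intro x hx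
    rw [SetLike.mem_coe, ← sum_support_decompose 𝒜 x]
    refine Subalgebra.sum_mem _ fun i hi => ?_
    rcases Nat.eq_zero_or_pos i with rfl | hpos
    · obtain ⟨r, hr⟩ : (decompose 𝒜 x 0 : A) ∈ LinearMap.range (Algebra.linearMap R A) :=
        h0 ▸ SetLike.coe_mem _
      rw [← hr]
      exact Subalgebra.algebraMap_mem _ r
    · exact Algebra.subset_adjoin ⟨(i, _), Finset.mem_biUnion.2
        ⟨x, hx, Finset.mem_image_of_mem _ (Finset.mem_filter.2 ⟨hi, hpos⟩)⟩, rfl⟩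

theorem isPgg_of_ker_aeval_eq_span {σ : Type*} {w : σ → ℕ} {a : σ → A} {t : ℕ}
    (hw : ∀ i, w i ∈ Set.Icc 1 t) (ha : ∀ i, a i ∈ 𝒜 (w i))
    (hsurj : Function.Surjective (aeval a : MvPolynomial σ R →ₐ[R] A))
    {G : Set (MvPolynomial σ R)} (hG : ∀ g ∈ G, ∃ n ≤ t, g.IsWeightedHomogeneous w n)
    (hker : RingHom.ker (aeval a) = Ideal.span G) : IsPgg 𝒜 t := by
  let ι : σ → PggVars 𝒜 t := fun i => ⟨⟨w i, hw i⟩, ⟨a i, ha i⟩⟩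
  have hcomp : (pggEval 𝒜 t).comp (rename ι) = aeval a := by
    ext i
    simp [pggEval, ι]
  let Q : PggVars 𝒜 t → MvPolynomial σ R := fun v =>
    weightedHomogeneousComponent w v.1 (Function.surjInv hsurj v.2)
  have hQ : ∀ v, pggEval 𝒜 t (rename ι (Q v)) = pggEval 𝒜 t (X v) := fun v => by
    have hlift := Function.surjInv_eq hsurj v.2
    rw [← AlgHom.comp_apply, hcomp, aeval_weightedHomogeneousComponent_of_mem 𝒜 ha
      (by rw [hlift]; exact v.2.2), hlift]
    simp [pggEval]
  refine ⟨fun b => ⟨rename ι (Function.surjInv hsurj b), ?_⟩, _, ?_,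
    ker_eq_span_of_ker_comp_rename _ ι Q hQ (hcomp ▸ hker)⟩
  · rw [← AlgHom.comp_apply, hcomp, Function.surjInv_eq hsurj]
  · rintro _ (⟨g, hg, rfl⟩ | ⟨v, rfl⟩)
    · obtain ⟨n, hn, hgn⟩ := hG g hg
      exact ⟨n, hn, IsWeightedHomogeneous.rename (f := ι) hgn⟩
    · refine ⟨v.1, v.1.2.2, ?_⟩
      rw [← mem_weightedHomogeneousSubmodule]
      exact Submodule.sub_mem _ (isWeightedHomogeneous_X R _ v)
        (IsWeightedHomogeneous.rename (f := ι)
          (weightedHomogeneousComponent_isWeightedHomogeneous (v.1 : ℕ) _))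

end Pgg

/-- **Proposition 5.8**: a finitely presented graded `R`-algebra is `t`-pgg for some `t ≥ 1`. -/
theorem stmt7 {R A : Type*} [CommRing R] [CommRing A] [Algebra R A]
    (𝒜 : ℕ → Submodule R A) [GradedAlgebra 𝒜]
    (h0 : 𝒜 0 = LinearMap.range (Algebra.linearMap R A))
    (hfp : Algebra.FinitePresentation R A) :
    ∃ t : ℕ, 1 ≤ t ∧ IsPgg 𝒜 t := by
  obtain ⟨s, hs, hadjoin⟩ := exists_finset_pos_degree_adjoin_eq_top 𝒜 h0
  have hsurj : Function.Surjective (aeval (fun x : s => x.1.2) : MvPolynomial s R →ₐ[R] A) := by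
    rw [← AlgHom.range_eq_top, ← Algebra.adjoin_range_eq_range_aeval, ← hadjoin]
    congr 1
    ext y
    simp
  obtain ⟨E, G, hG, hker⟩ :=
    exists_isWeightedHomogeneous_span_ker_aeval 𝒜 (fun x : s => (hs x.1 x.2).2) hsurj
  refine ⟨s.sup Prod.fst + E + 1, by omega, isPgg_of_ker_aeval_eq_span 𝒜
    (fun x : s => ⟨(hs x.1 x.2).1, ?_⟩) (fun x => (hs x.1 x.2).2) hsurj (fun g hg => ?_) hker⟩
  · have := Finset.le_sup (f := Prod.fst) x.2
    omega
  · obtain ⟨n, hn, hgn⟩ := hG g hg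
    exact ⟨n, by omega, hgn⟩
end

section
/- Let R be a commutative ring, A a graded R-algebra (with grading 𝒜 and 𝒜 0 equal to the image of R), and t ≥ 1 an integer. Then A is a t-pgg R-algebra if and only if for every prime ideal p of R, the graded R_p-algebra A ⊗_R R_p, with grading whose degree-n component is the image of 𝒜 n ⊗_R R_p, is a t-pgg R_p-algebra. -/
/-!
Partially generated graded algebras (pgg).

A graded `R`-algebra `A` (grading `𝒜 : ℕ → Submodule R A`) is `t`-pgg if the evaluation
map from the (weighted) polynomial ring on variables `X_(i,a)` (`1 ≤ i ≤ t`, `a ∈ 𝒜 i`,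
`X_(i,a)` of weight `i`) sending `X_(i,a) ↦ a` is surjective and its kernel is generated
by weighted-homogeneous polynomials of weighted degree at most `t`.
-/

open MvPolynomial

open MvPolynomial

section AuxLemmas

/-- The difference of two algebra homomorphisms on any polynomial lies in the ideal
generated by their differences on the variables. -/
theorem pgg_algHom_sub_mem {S T σ : Type*} [CommRing S] [CommRing T] [Algebra S T]
    (φ₁ φ₂ : MvPolynomial σ S →ₐ[S] T) (q : MvPolynomial σ S) :
    φ₁ q - φ₂ q ∈ Ideal.span (Set.range fun v => φ₁ (X v) - φ₂ (X v)) := by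
  induction q using MvPolynomial.induction_on with
  | C r => simp only [algHom_C, sub_self]; exact zero_mem _
  | add p q hp hq =>
    have h : φ₁ (p + q) - φ₂ (p + q) = (φ₁ p - φ₂ p) + (φ₁ q - φ₂ q) := by
      rw [map_add, map_add]; ring
    rw [h]; exact add_mem hp hq
  | mul_X p v hp =>
    have h : φ₁ (p * X v) - φ₂ (p * X v)
        = φ₁ p * (φ₁ (X v) - φ₂ (X v)) + (φ₁ p - φ₂ p) * φ₂ (X v) := by
      rw [map_mul, map_mul]; ring
    rw [h]
    exact add_mem (Ideal.mul_mem_left _ _ (Ideal.subset_span ⟨v, rfl⟩))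
      (Ideal.mul_mem_right _ _ hp)

/-- Evaluating a weighted-homogeneous polynomial at elements of the right graded pieces
lands in the corresponding graded piece. -/
theorem pgg_aeval_mem_graded {S C σ : Type*} [CommRing S] [CommRing C] [Algebra S C]
    (ℬ : ℕ → Submodule S C) (hgm : SetLike.GradedMonoid ℬ) (w : σ → ℕ) (F : σ → C)
    (hF : ∀ v, F v ∈ ℬ (w v)) {q : MvPolynomial σ S} {n : ℕ}
    (hq : q.IsWeightedHomogeneous w n) : aeval F q ∈ ℬ n := by
  classical
  rw [q.as_sum, map_sum]
  apply Submodule.sum_mem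
  intro d hd
  rw [aeval_monomial, ← Algebra.smul_def]
  apply Submodule.smul_mem
  have h1 : (Finsupp.prod d fun i k => F i ^ k) ∈ ℬ (∑ i ∈ d.support, d i • w i) := by
    exact SetLike.prod_pow_mem_graded ℬ w F d (fun k _ => hF k)
  have h2 : (∑ i ∈ d.support, d i • w i) = n := by
    have := hq (mem_support_iff.mp hd)
    rw [← this, Finsupp.weight_apply, Finsupp.sum]
  rw [← h2]
  exact h1

/-- An algebra endomorphism sending each variable to a weighted-homogeneous polynomial of
degree its weight preserves weighted homogeneity. -/
theorem pgg_aeval_isWeightedHomogeneous {S σ τ : Type*} [CommRing S] (w : σ → ℕ) (w' : τ → ℕ)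
    (F : σ → MvPolynomial τ S) (hF : ∀ v, (F v).IsWeightedHomogeneous w' (w v))
    {q : MvPolynomial σ S} {n : ℕ} (hq : q.IsWeightedHomogeneous w n) :
    (aeval F q).IsWeightedHomogeneous w' n :=
  pgg_aeval_mem_graded (weightedHomogeneousSubmodule S w')
    WeightedHomogeneousSubmodule.gradedMonoid w F hF hq

theorem pgg_map_isWeightedHomogeneous {S T σ : Type*} [CommRing S] [CommRing T] (φ : S →+* T)
    {w : σ → ℕ} {q : MvPolynomial σ S} {n : ℕ} (hq : q.IsWeightedHomogeneous w n) :
    (map φ q).IsWeightedHomogeneous w n := by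
  intro d hd
  apply hq
  rw [coeff_map] at hd
  exact fun h => hd (by rw [h, map_zero])

theorem pgg_map_weightedHomogeneousComponent {S T σ : Type*} [CommRing S] [CommRing T]
    (φ : S →+* T) (w : σ → ℕ) (n : ℕ) (q : MvPolynomial σ S) :
    map φ (weightedHomogeneousComponent w n q)
      = weightedHomogeneousComponent w n (map φ q) := by
  classical
  ext d
  simp [coeff_map, coeff_weightedHomogeneousComponent, apply_ite φ]

end AuxLemmas
section LocAux

open MvPolynomial TensorProduct

variable {R : Type*} [CommRing R] (S : Submonoid R)

/-- Clearing denominators of a multivariate polynomial over a localization. -/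
theorem pgg_loc_clear {σ : Type*} (u : MvPolynomial σ (Localization S)) :
    ∃ (s : S) (m : MvPolynomial σ R),
      MvPolynomial.map (algebraMap R (Localization S)) m = (s : R) • u := by
  classical
  obtain ⟨s, hs⟩ := IsLocalization.exist_integer_multiples S u.support fun d => coeff d u
  choose r hr using fun (d : σ →₀ ℕ) (hd : d ∈ u.support) => hs d hd
  refine ⟨s, ∑ d ∈ u.support, monomial d (if h : d ∈ u.support then r d h else 0), ?_⟩
  ext d
  rw [coeff_map, coeff_smul]
  rw [MvPolynomial.coeff_sum]
  simp only [coeff_monomial]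
  rw [Finset.sum_ite_eq' u.support d _]
  by_cases hd : d ∈ u.support
  · rw [if_pos hd, dif_pos hd, hr d hd]
  · rw [if_neg hd, map_zero, notMem_support_iff.mp hd, smul_zero]

/-- A polynomial mapping to zero in the localization is killed by an element of `S`. -/
theorem pgg_loc_zero {σ : Type*} (m : MvPolynomial σ R)
    (h : MvPolynomial.map (algebraMap R (Localization S)) m = 0) :
    ∃ s : S, (s : R) • m = 0 := by
  classical
  have h' : ∀ d ∈ m.support, ∃ s : S, (s : R) * coeff d m = 0 := by
    intro d _
    have h0 : algebraMap R (Localization S) (coeff d m) = 0 := by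
      rw [← coeff_map, h, coeff_zero]
    exact (IsLocalization.map_eq_zero_iff S (Localization S) _).mp h0
  choose c hc using h'
  refine ⟨∏ d ∈ m.support.attach, c d.1 d.2, ?_⟩
  ext d
  rw [coeff_smul, coeff_zero, smul_eq_mul]
  by_cases hd : d ∈ m.support
  · obtain ⟨k, hk⟩ := Finset.dvd_prod_of_mem
      (fun e : {x // x ∈ m.support} => (c e.1 e.2 : R)) (Finset.mem_attach _ ⟨d, hd⟩)
    rw [SubmonoidClass.coe_finset_prod, hk, mul_comm (c d hd : R) k, mul_assoc, hc d hd,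
      mul_zero]
  · rw [notMem_support_iff.mp hd, mul_zero]

theorem pgg_tensor_one_eq_zero {A : Type*} [CommRing A] [Algebra R A]
    {a : A} (h : (1 : Localization S) ⊗ₜ[R] a = 0) : ∃ s : S, (s : R) • a = 0 := by
  haveI : IsLocalizedModule S (TensorProduct.mk R (Localization S) A 1) :=
    (isLocalizedModule_iff_isBaseChange S (Localization S) _).mpr
      (TensorProduct.isBaseChange R A (Localization S))
  obtain ⟨s, hs⟩ :=
    (IsLocalizedModule.eq_zero_iff S (TensorProduct.mk R (Localization S) A 1)).mp h
  exact ⟨s, hs⟩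

theorem pgg_tensor_mem_span {A : Type*} [CommRing A] [Algebra R A]
    (z : Localization S ⊗[R] A) :
    z ∈ Submodule.span (Localization S)
      (Set.range fun a : A => (1 : Localization S) ⊗ₜ[R] a) := by
  induction z with
  | zero => exact zero_mem _
  | tmul r a =>
    have h : r ⊗ₜ[R] a = r • ((1 : Localization S) ⊗ₜ[R] a) := by
      rw [TensorProduct.smul_tmul', smul_eq_mul, mul_one]
    rw [h]
    exact Submodule.smul_mem _ _ (Submodule.subset_span ⟨a, rfl⟩)
  | add x y hx hy => exact add_mem hx hy

/-- An element whose `s`-multiple lies in an ideal of a polynomial ring over a localization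
already lies in the ideal. -/
theorem pgg_mem_of_smul_mem {σ : Type*} {I : Ideal (MvPolynomial σ (Localization S))}
    {u : MvPolynomial σ (Localization S)} (s : S) (h : (s : R) • u ∈ I) : u ∈ I := by
  obtain ⟨v, hv⟩ := IsLocalization.map_units (Localization S) s
  have h1 : u = C ((v⁻¹ : _ˣ) : Localization S) * ((s : R) • u) := by
    rw [← algebraMap_smul (Localization S) (s : R) u, smul_eq_C_mul, ← mul_assoc, ← C_mul,
      ← hv, Units.inv_mul, C_1, one_mul]
  rw [h1]
  exact Ideal.mul_mem_left _ _ h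

end LocAux
section KerHom

open MvPolynomial

variable {R A : Type*} [CommRing R] [CommRing A] [Algebra R A]

/-- The kernel of `pggEval` is a weighted-homogeneous ideal. -/
theorem pgg_ker_homogeneous (𝒜 : ℕ → Submodule R A) [GradedAlgebra 𝒜] (t : ℕ)
    {q : MvPolynomial (PggVars 𝒜 t) R} (hq : pggEval 𝒜 t q = 0) (n : ℕ) :
    pggEval 𝒜 t (weightedHomogeneousComponent (pggWeight 𝒜 t) n q) = 0 := by
  classical
  set w := pggWeight 𝒜 t with hw
  have hmem : ∀ k, pggEval 𝒜 t (weightedHomogeneousComponent w k q) ∈ 𝒜 k := by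
    intro k
    exact pgg_aeval_mem_graded 𝒜 inferInstance w _ (fun v => v.2.2)
      (weightedHomogeneousComponent_isWeightedHomogeneous k q)
  set N := Finset.image (Finsupp.weight w) q.support with hN
  by_cases hn : n ∈ N
  · have hq' : q = ∑ k ∈ N, weightedHomogeneousComponent w k q := by
      rw [← finsum_eq_finset_sum_of_support_subset _ ?_, sum_weightedHomogeneousComponent]
      intro k hk
      simp only [Function.mem_support] at hk
      by_contra hkN
      exact hk (weightedHomogeneousComponent_eq_zero_of_notMem w q k hkN)
    have h0 : (0 : A) = ∑ k ∈ N, pggEval 𝒜 t (weightedHomogeneousComponent w k q) := by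
      rw [← map_sum, ← hq', hq]
    have h1 : ((DirectSum.decompose 𝒜
        (∑ k ∈ N, pggEval 𝒜 t (weightedHomogeneousComponent w k q)) n : 𝒜 n) : A) = 0 := by
      rw [← h0, DirectSum.decompose_zero]
      rfl
    rw [DirectSum.decompose_sum, DFinsupp.finset_sum_apply,
      AddSubmonoidClass.coe_finset_sum] at h1
    rw [Finset.sum_eq_single n
      (fun k _ hk => by rw [DirectSum.decompose_of_mem_ne 𝒜 (hmem k) hk])
      (fun h => absurd hn h)] at h1
    rwa [DirectSum.decompose_of_mem_same 𝒜 (hmem n)] at h1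
  · rw [weightedHomogeneousComponent_eq_zero_of_notMem w q n hn, map_zero]

end KerHom
section Setup

open MvPolynomial TensorProduct

variable {R A : Type*} [CommRing R] [CommRing A] [Algebra R A]
variable (𝒜 : ℕ → Submodule R A) (t : ℕ) (S : Submonoid R)

/-- The localized grading on `Localization S ⊗[R] A`. -/
abbrev pggLocGrading : ℕ → Submodule (Localization S) (Localization S ⊗[R] A) :=
  fun n => Submodule.span (Localization S)
    ((fun a => (1 : Localization S) ⊗ₜ[R] a) '' (𝒜 n : Set A))

/-- Evaluation on the original variables, with localized coefficients. -/
noncomputable def pggE :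
    MvPolynomial (PggVars 𝒜 t) (Localization S) →ₐ[Localization S] Localization S ⊗[R] A :=
  aeval fun v => (1 : Localization S) ⊗ₜ[R] (v.2 : A)

/-- Coefficient-wise localization of polynomials. -/
noncomputable def pggLoc :
    MvPolynomial (PggVars 𝒜 t) R →ₐ[R] MvPolynomial (PggVars 𝒜 t) (Localization S) :=
  mapAlgHom (Algebra.ofId R (Localization S))

theorem pggLoc_eq (q : MvPolynomial (PggVars 𝒜 t) R) :
    pggLoc 𝒜 t S q = MvPolynomial.map (algebraMap R (Localization S)) q := by
  rw [pggLoc, mapAlgHom_apply]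
  congr 1

/-- The map on variables induced by `a ↦ 1 ⊗ a`. -/
noncomputable def pggG : PggVars 𝒜 t → PggVars (pggLocGrading 𝒜 S) t :=
  fun v => ⟨v.1, ⟨(1 : Localization S) ⊗ₜ[R] (v.2 : A),
    Submodule.subset_span ⟨(v.2 : A), v.2.2, rfl⟩⟩⟩

/-- Inclusion of the original variables into the localized variables. -/
noncomputable def pggTheta :
    MvPolynomial (PggVars 𝒜 t) (Localization S) →ₐ[Localization S]
      MvPolynomial (PggVars (pggLocGrading 𝒜 S) t) (Localization S) :=
  aeval fun v => X (pggG 𝒜 t S v)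

theorem pgg_sigma_exists (w' : PggVars (pggLocGrading 𝒜 S) t) :
    ∃ u : MvPolynomial (PggVars 𝒜 t) (Localization S),
      IsWeightedHomogeneous (pggWeight 𝒜 t) u (w'.1 : ℕ) ∧ pggE 𝒜 t S u = (w'.2 : _) := by
  obtain ⟨n, cf, gf, hsum⟩ := Submodule.mem_span_set'.mp w'.2.2
  choose av hav1 hav2 using fun j : Fin n => (gf j).2
  refine ⟨∑ j, cf j • X ⟨w'.1, ⟨av j, hav1 j⟩⟩, ?_, ?_⟩
  · have : (∑ j, cf j • X (⟨w'.1, ⟨av j, hav1 j⟩⟩ : PggVars 𝒜 t))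
        ∈ weightedHomogeneousSubmodule (Localization S) (pggWeight 𝒜 t) (w'.1 : ℕ) := by
      apply Submodule.sum_mem
      intro j _
      exact Submodule.smul_mem _ _ (isWeightedHomogeneous_X _ _ _)
    exact this
  · rw [map_sum]
    rw [← hsum]
    congr 1
    funext j
    rw [map_smul, pggE, aeval_X]
    exact congrArg (cf j • ·) (hav2 j)

/-- A homogeneous expression of each localized variable in terms of the original ones. -/
noncomputable def pggSigma (w' : PggVars (pggLocGrading 𝒜 S) t) :
    MvPolynomial (PggVars 𝒜 t) (Localization S) :=
  (pgg_sigma_exists 𝒜 t S w').choose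

theorem pggSigma_hom (w' : PggVars (pggLocGrading 𝒜 S) t) :
    IsWeightedHomogeneous (pggWeight 𝒜 t) (pggSigma 𝒜 t S w') (w'.1 : ℕ) :=
  (pgg_sigma_exists 𝒜 t S w').choose_spec.1

theorem pggSigma_eval (w' : PggVars (pggLocGrading 𝒜 S) t) :
    pggE 𝒜 t S (pggSigma 𝒜 t S w') = (w'.2 : _) :=
  (pgg_sigma_exists 𝒜 t S w').choose_spec.2

/-- Rewriting localized variables in terms of the original ones. -/
noncomputable def pggPhi :
    MvPolynomial (PggVars (pggLocGrading 𝒜 S) t) (Localization S) →ₐ[Localization S]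
      MvPolynomial (PggVars 𝒜 t) (Localization S) :=
  aeval (pggSigma 𝒜 t S)

theorem pggE_loc (q : MvPolynomial (PggVars 𝒜 t) R) :
    pggE 𝒜 t S (pggLoc 𝒜 t S q) = (1 : Localization S) ⊗ₜ[R] pggEval 𝒜 t q := by
  have h : ((pggE 𝒜 t S).restrictScalars R).comp (pggLoc 𝒜 t S)
      = (Algebra.TensorProduct.includeRight : A →ₐ[R] Localization S ⊗[R] A).comp
        (pggEval 𝒜 t) := by
    apply MvPolynomial.algHom_ext
    intro v
    simp [pggE, pggLoc, pggEval]
  exact AlgHom.congr_fun h q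

theorem pggEval_theta (u : MvPolynomial (PggVars 𝒜 t) (Localization S)) :
    pggEval (pggLocGrading 𝒜 S) t (pggTheta 𝒜 t S u) = pggE 𝒜 t S u := by
  have h : (pggEval (pggLocGrading 𝒜 S) t).comp (pggTheta 𝒜 t S) = pggE 𝒜 t S := by
    apply MvPolynomial.algHom_ext
    intro v
    simp [pggEval, pggTheta, pggE, pggG]
  exact AlgHom.congr_fun h u

theorem pggE_phi (u : MvPolynomial (PggVars (pggLocGrading 𝒜 S) t) (Localization S)) :
    pggE 𝒜 t S (pggPhi 𝒜 t S u) = pggEval (pggLocGrading 𝒜 S) t u := by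
  have h : (pggE 𝒜 t S).comp (pggPhi 𝒜 t S) = pggEval (pggLocGrading 𝒜 S) t := by
    apply MvPolynomial.algHom_ext
    intro w'
    simp only [AlgHom.coe_comp, Function.comp_apply, pggPhi, aeval_X]
    rw [pggSigma_eval]
    simp [pggEval]
  exact AlgHom.congr_fun h u

end Setup
section KerTransfer

open MvPolynomial TensorProduct

variable {R A : Type*} [CommRing R] [CommRing A] [Algebra R A]
variable (𝒜 : ℕ → Submodule R A) (t : ℕ) (S : Submonoid R)

/-- Elements of the kernel of `pggE` lie in the extension of the kernel of `pggEval`. -/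
theorem pgg_ker_e_mem (u : MvPolynomial (PggVars 𝒜 t) (Localization S))
    (hu : pggE 𝒜 t S u = 0) :
    u ∈ Ideal.span ((fun q => pggLoc 𝒜 t S q) '' {q | pggEval 𝒜 t q = 0}) := by
  obtain ⟨s, m, hm⟩ := pgg_loc_clear S u
  rw [← pggLoc_eq] at hm
  have h1 : (1 : Localization S) ⊗ₜ[R] pggEval 𝒜 t m = 0 := by
    rw [← pggE_loc, hm, ← algebraMap_smul (Localization S) (s : R) u, map_smul, hu,
      smul_zero]
  obtain ⟨s', hs'⟩ := pgg_tensor_one_eq_zero S h1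
  have h2 : pggEval 𝒜 t ((s' : R) • m) = 0 := by rw [map_smul, hs']
  have h3 : pggLoc 𝒜 t S ((s' : R) • m) = ((s' * s : S) : R) • u := by
    rw [map_smul, hm, ← mul_smul, Submonoid.coe_mul]
  apply pgg_mem_of_smul_mem S (s' * s)
  rw [← h3]
  exact Ideal.subset_span ⟨_, h2, rfl⟩

/-- Homogeneous elements of the kernel of `pggE` are multiples of localizations of
homogeneous kernel elements downstairs. -/
theorem pgg_ker_e_homog [GradedAlgebra 𝒜] (u : MvPolynomial (PggVars 𝒜 t) (Localization S))
    (n : ℕ) (hn : n ≤ t) (hu : IsWeightedHomogeneous (pggWeight 𝒜 t) u n)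
    (h0 : pggE 𝒜 t S u = 0) :
    ∃ (s : S) (j : MvPolynomial (PggVars 𝒜 t) R),
      (pggEval 𝒜 t j = 0 ∧ ∃ k ≤ t, IsWeightedHomogeneous (pggWeight 𝒜 t) j k) ∧
        pggLoc 𝒜 t S j = (s : R) • u := by
  obtain ⟨s, m, hm⟩ := pgg_loc_clear S u
  rw [← pggLoc_eq] at hm
  have h1 : (1 : Localization S) ⊗ₜ[R] pggEval 𝒜 t m = 0 := by
    rw [← pggE_loc, hm, ← algebraMap_smul (Localization S) (s : R) u, map_smul, h0,
      smul_zero]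
  obtain ⟨s', hs'⟩ := pgg_tensor_one_eq_zero S h1
  have h2 : pggEval 𝒜 t ((s' : R) • m) = 0 := by rw [map_smul, hs']
  set j := weightedHomogeneousComponent (pggWeight 𝒜 t) n ((s' : R) • m) with hj
  have hj0 : pggEval 𝒜 t j = 0 := pgg_ker_homogeneous 𝒜 t h2 n
  have hjh : IsWeightedHomogeneous (pggWeight 𝒜 t) j n :=
    weightedHomogeneousComponent_isWeightedHomogeneous n _
  refine ⟨s' * s, j, ⟨hj0, n, hn, hjh⟩, ?_⟩
  have hlm : pggLoc 𝒜 t S ((s' : R) • m) = ((s' * s : S) : R) • u := by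
    rw [map_smul, hm, ← mul_smul, Submonoid.coe_mul]
  have hhom : IsWeightedHomogeneous (pggWeight 𝒜 t) (((s' * s : S) : R) • u) n := by
    have : (((s' * s : S) : R) • u)
        ∈ weightedHomogeneousSubmodule (Localization S) (pggWeight 𝒜 t) n := by
      rw [← algebraMap_smul (Localization S) ((s' * s : S) : R) u]
      exact Submodule.smul_mem _ _ hu
    exact this
  rw [hj, pggLoc_eq, pgg_map_weightedHomogeneousComponent, ← pggLoc_eq, hlm]
  exact hhom.weightedHomogeneousComponent_same

end KerTransfer
section Forward

open MvPolynomial TensorProduct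

variable {R A : Type*} [CommRing R] [CommRing A] [Algebra R A]
variable (𝒜 : ℕ → Submodule R A) (t : ℕ) (S : Submonoid R)

theorem pggTheta_hom {u : MvPolynomial (PggVars 𝒜 t) (Localization S)} {n : ℕ}
    (hu : IsWeightedHomogeneous (pggWeight 𝒜 t) u n) :
    IsWeightedHomogeneous (pggWeight (pggLocGrading 𝒜 S) t) (pggTheta 𝒜 t S u) n :=
  pgg_aeval_isWeightedHomogeneous _ _ _ (fun _ => isWeightedHomogeneous_X _ _ _) hu

theorem pggPhi_hom {u : MvPolynomial (PggVars (pggLocGrading 𝒜 S) t) (Localization S)} {n : ℕ}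
    (hu : IsWeightedHomogeneous (pggWeight (pggLocGrading 𝒜 S) t) u n) :
    IsWeightedHomogeneous (pggWeight 𝒜 t) (pggPhi 𝒜 t S u) n :=
  pgg_aeval_isWeightedHomogeneous _ _ _ (fun w' => pggSigma_hom 𝒜 t S w') hu

set_option maxHeartbeats 2000000 in
theorem pgg_forward (h : IsPgg 𝒜 t) : IsPgg (pggLocGrading 𝒜 S) t := by
  obtain ⟨hsurj, Sgen, hShom, hker⟩ := h
  set H : Set (MvPolynomial (PggVars 𝒜 t) R) :=
    {q | pggEval 𝒜 t q = 0 ∧ ∃ n ≤ t, IsWeightedHomogeneous (pggWeight 𝒜 t) q n} with hH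
  have hSsub : Sgen ⊆ H := by
    intro q hq
    refine ⟨RingHom.mem_ker.mp ?_, hShom q hq⟩
    rw [hker]
    exact Ideal.subset_span hq
  have hkerH : RingHom.ker (pggEval 𝒜 t) = Ideal.span H := by
    apply le_antisymm
    · rw [hker]; exact Ideal.span_mono hSsub
    · rw [Ideal.span_le]; intro q hq; exact RingHom.mem_ker.mpr hq.1
  constructor
  · -- surjectivity
    intro z
    have hz := pgg_tensor_mem_span S z
    have hle : Submodule.span (Localization S)
        (Set.range fun a : A => (1 : Localization S) ⊗ₜ[R] a)
        ≤ Subalgebra.toSubmodule (pggEval (pggLocGrading 𝒜 S) t).range := by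
      rw [Submodule.span_le]
      rintro _ ⟨a, rfl⟩
      obtain ⟨q, rfl⟩ := hsurj a
      refine ⟨pggTheta 𝒜 t S (pggLoc 𝒜 t S q), ?_⟩
      show pggEval (pggLocGrading 𝒜 S) t (pggTheta 𝒜 t S (pggLoc 𝒜 t S q)) = _
      rw [pggEval_theta, pggE_loc]
    obtain ⟨Q, hQ⟩ := hle hz
    exact ⟨Q, hQ⟩
  · refine ⟨(fun q => pggTheta 𝒜 t S (pggLoc 𝒜 t S q)) '' H ∪
      Set.range (fun w' : PggVars (pggLocGrading 𝒜 S) t =>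
        X w' - pggTheta 𝒜 t S (pggSigma 𝒜 t S w')), ?_, ?_⟩
    · rintro q (⟨h, ⟨hh0, n, hn, hhom⟩, rfl⟩ | ⟨w', rfl⟩)
      · refine ⟨n, hn, ?_⟩
        apply pggTheta_hom
        rw [pggLoc_eq]
        exact pgg_map_isWeightedHomogeneous _ hhom
      · refine ⟨(w'.1 : ℕ), w'.1.2.2, ?_⟩
        have h1 : (X w' - pggTheta 𝒜 t S (pggSigma 𝒜 t S w'))
            ∈ weightedHomogeneousSubmodule (Localization S)
              (pggWeight (pggLocGrading 𝒜 S) t) (w'.1 : ℕ) :=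
          sub_mem (isWeightedHomogeneous_X _ _ _) (pggTheta_hom 𝒜 t S (pggSigma_hom 𝒜 t S w'))
        exact h1
    · apply le_antisymm
      · intro q hq
        have hq0 : pggEval (pggLocGrading 𝒜 S) t q = 0 := RingHom.mem_ker.mp hq
        have hd : q - pggTheta 𝒜 t S (pggPhi 𝒜 t S q) ∈ Ideal.span
            (Set.range fun w' : PggVars (pggLocGrading 𝒜 S) t =>
              X w' - pggTheta 𝒜 t S (pggSigma 𝒜 t S w')) := by
          have h := pgg_algHom_sub_mem (AlgHom.id (Localization S) _)
            ((pggTheta 𝒜 t S).comp (pggPhi 𝒜 t S)) q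
          simpa [pggPhi, aeval_X] using h
        have he : pggE 𝒜 t S (pggPhi 𝒜 t S q) = 0 := by rw [pggE_phi, hq0]
        have h2 := pgg_ker_e_mem 𝒜 t S _ he
        have h3 : Ideal.span ((fun q => pggLoc 𝒜 t S q) '' {q | pggEval 𝒜 t q = 0})
            ≤ Ideal.map (pggLoc 𝒜 t S) (RingHom.ker (pggEval 𝒜 t)) := by
          rw [Ideal.span_le]
          rintro _ ⟨x, hx, rfl⟩
          exact Ideal.mem_map_of_mem _ (RingHom.mem_ker.mpr hx)
        have h5 : pggPhi 𝒜 t S q ∈ Ideal.span ((fun q => pggLoc 𝒜 t S q) '' H) := by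
          have h4 : Ideal.map (pggLoc 𝒜 t S) (RingHom.ker (pggEval 𝒜 t))
              = Ideal.span ((fun q => pggLoc 𝒜 t S q) '' H) := by
            rw [hkerH, Ideal.map_span]
          exact h4 ▸ h3 h2
        have h6 : pggTheta 𝒜 t S (pggPhi 𝒜 t S q)
            ∈ Ideal.span ((fun q => pggTheta 𝒜 t S (pggLoc 𝒜 t S q)) '' H) := by
          have h7 := Ideal.mem_map_of_mem (pggTheta 𝒜 t S) h5
          rw [Ideal.map_span, Set.image_image] at h7
          exact h7
        have hqe : q = (q - pggTheta 𝒜 t S (pggPhi 𝒜 t S q))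
            + pggTheta 𝒜 t S (pggPhi 𝒜 t S q) := by ring
        rw [hqe]
        exact add_mem (Ideal.span_mono Set.subset_union_right hd)
          (Ideal.span_mono Set.subset_union_left h6)
      · rw [Ideal.span_le]
        rintro x (⟨h, hHm, rfl⟩ | ⟨w', rfl⟩)
        · apply SetLike.mem_coe.mpr
          apply RingHom.mem_ker.mpr
          rw [pggEval_theta, pggE_loc, hHm.1, TensorProduct.tmul_zero]
        · apply SetLike.mem_coe.mpr
          apply RingHom.mem_ker.mpr
          rw [map_sub, pggEval_theta, pggSigma_eval]
          have hX : pggEval (pggLocGrading 𝒜 S) t (X w') = (w'.2 : Localization S ⊗[R] A) := by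
            rw [pggEval, aeval_X]
          rw [hX, sub_self]

end Forward
section Backward

open MvPolynomial TensorProduct Pointwise

variable {R A : Type*} [CommRing R] [CommRing A] [Algebra R A]
variable (𝒜 : ℕ → Submodule R A) (t : ℕ)

set_option maxHeartbeats 2000000 in
theorem pgg_backward_surj
    (h : ∀ p : PrimeSpectrum R, IsPgg (pggLocGrading 𝒜 p.asIdeal.primeCompl) t) :
    Function.Surjective (pggEval 𝒜 t) := by
  intro a
  set M0 := Subalgebra.toSubmodule (pggEval 𝒜 t).range with hM0
  have hE : M0.colon (Submodule.span R {a}) = ⊤ := by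
    by_contra hne
    obtain ⟨mx, hmx, hEm⟩ := Ideal.exists_le_maximal _ hne
    set p : PrimeSpectrum R := ⟨mx, hmx.isPrime⟩ with hp
    set S := p.asIdeal.primeCompl with hSdef
    obtain ⟨hsurj', -⟩ := h p
    set Msp := Submodule.span (Localization S)
        ((fun x : A => (1 : Localization S) ⊗ₜ[R] x) '' (M0 : Set A)) with hMsp
    have hmul : ∀ x ∈ Msp, ∀ y ∈ Msp, x * y ∈ Msp := by
      intro x hx y hy
      have hsub : ((fun x : A => (1 : Localization S) ⊗ₜ[R] x) '' (M0 : Set A)) *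
          ((fun x : A => (1 : Localization S) ⊗ₜ[R] x) '' (M0 : Set A)) ⊆
          ((fun x : A => (1 : Localization S) ⊗ₜ[R] x) '' (M0 : Set A)) := by
        rintro _ ⟨_, ⟨u, hu, rfl⟩, _, ⟨v, hv, rfl⟩, rfl⟩
        have huv : u * v ∈ (pggEval 𝒜 t).range :=
          mul_mem (show u ∈ (pggEval 𝒜 t).range from hu)
            (show v ∈ (pggEval 𝒜 t).range from hv)
        exact ⟨u * v, huv, by simp only [Algebra.TensorProduct.tmul_mul_tmul, one_mul]⟩
      have h2 : Msp * Msp ≤ Msp := by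
        rw [hMsp, Submodule.span_mul_span]
        exact Submodule.span_le.mpr (hsub.trans Submodule.subset_span)
      exact h2 (Submodule.mul_mem_mul hx hy)
    have hval : ∀ w' : PggVars (pggLocGrading 𝒜 S) t,
        ((w'.2 : Localization S ⊗[R] A)) ∈ Msp := by
      intro w'
      have h1 : ((fun a : A => (1 : Localization S) ⊗ₜ[R] a) '' (𝒜 w'.1 : Set A)) ⊆
          ((fun x : A => (1 : Localization S) ⊗ₜ[R] x) '' (M0 : Set A)) := by
        apply Set.image_mono
        intro x hx
        refine (AlgHom.mem_range _).mpr ⟨X ⟨w'.1, ⟨x, hx⟩⟩, ?_⟩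
        show pggEval 𝒜 t (X ⟨w'.1, ⟨x, hx⟩⟩) = x
        rw [pggEval, aeval_X]
      exact Submodule.span_le.mpr (h1.trans Submodule.subset_span) w'.2.2
    have hone : (1 : Localization S ⊗[R] A) ∈ Msp :=
      Submodule.subset_span ⟨1, show (1 : A) ∈ (pggEval 𝒜 t).range from one_mem _,
        Algebra.TensorProduct.one_def.symm⟩
    have hrange : ∀ Q, pggEval (pggLocGrading 𝒜 S) t Q ∈ Msp := by
      intro Q
      induction Q using MvPolynomial.induction_on with
      | C r =>
        have h1 : pggEval (pggLocGrading 𝒜 S) t (C r)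
            = r • (1 : Localization S ⊗[R] A) := by
          rw [pggEval, aeval_C, Algebra.algebraMap_eq_smul_one]
        rw [h1]
        exact Submodule.smul_mem _ _ hone
      | add p' q' hp hq => rw [map_add]; exact add_mem hp hq
      | mul_X p' w' hp =>
        rw [map_mul]
        have hX : pggEval (pggLocGrading 𝒜 S) t (X w')
            = (w'.2 : Localization S ⊗[R] A) := by rw [pggEval, aeval_X]
        rw [hX]
        exact hmul _ hp _ (hval w')
    obtain ⟨Q, hQ⟩ := hsurj' ((1 : Localization S) ⊗ₜ[R] a)
    have h1 : (1 : Localization S) ⊗ₜ[R] a ∈ Msp := hQ ▸ hrange Q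
    obtain ⟨n, cf, gf, hsum⟩ := Submodule.mem_span_set'.mp h1
    choose bv hbv1 hbv2 using fun j : Fin n => (gf j).2
    obtain ⟨s, hs⟩ := IsLocalization.exist_integer_multiples S (Finset.univ : Finset (Fin n)) cf
    choose rv hrv using fun j : Fin n => hs j (Finset.mem_univ j)
    have hkey : (1 : Localization S) ⊗ₜ[R] ((s : R) • a - ∑ j, rv j • bv j) = 0 := by
      rw [TensorProduct.tmul_sub, sub_eq_zero, TensorProduct.tmul_sum,
        TensorProduct.tmul_smul, ← hsum, Finset.smul_sum]
      apply Finset.sum_congr rfl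
      intro j _
      rw [← smul_assoc, ← hrv j, algebraMap_smul, ← hbv2 j, TensorProduct.tmul_smul]
    obtain ⟨s', hs'⟩ := pgg_tensor_one_eq_zero S hkey
    have h2 : ((s' * s : S) : R) • a ∈ M0 := by
      have h3 : (s' : R) • ((s : R) • a) = (s' : R) • (∑ j, rv j • bv j) := by
        have h4 := hs'
        rwa [smul_sub, sub_eq_zero] at h4
      rw [Submonoid.coe_mul, mul_smul, h3]
      exact Submodule.smul_mem _ _ (Submodule.sum_mem _ fun j _ => Submodule.smul_mem _ _
        (show bv j ∈ M0 from hbv1 j))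
    exact (s' * s).2 (hEm (Submodule.mem_colon_span_singleton.mpr h2))
  have h1 : (1 : R) ∈ M0.colon (Submodule.span R {a}) := hE ▸ Submodule.mem_top
  have h2 := Submodule.mem_colon_span_singleton.mp h1
  rw [one_smul] at h2
  exact (AlgHom.mem_range _).mp h2

end Backward
section BackwardKer

open MvPolynomial TensorProduct

variable {R A : Type*} [CommRing R] [CommRing A] [Algebra R A]
variable (𝒜 : ℕ → Submodule R A) (t : ℕ)

set_option maxHeartbeats 4000000 in
theorem pgg_backward_ker [GradedAlgebra 𝒜]
    (h : ∀ p : PrimeSpectrum R, IsPgg (pggLocGrading 𝒜 p.asIdeal.primeCompl) t) :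
    RingHom.ker (pggEval 𝒜 t) = Ideal.span
      {q | pggEval 𝒜 t q = 0 ∧ ∃ n ≤ t, IsWeightedHomogeneous (pggWeight 𝒜 t) q n} := by
  classical
  set H : Set (MvPolynomial (PggVars 𝒜 t) R) :=
    {q | pggEval 𝒜 t q = 0 ∧ ∃ n ≤ t, IsWeightedHomogeneous (pggWeight 𝒜 t) q n} with hH
  set J := Ideal.span H with hJ
  apply le_antisymm
  swap
  · rw [Ideal.span_le]; intro q hq; exact RingHom.mem_ker.mpr hq.1
  intro q hq
  have hq0 : pggEval 𝒜 t q = 0 := RingHom.mem_ker.mp hq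
  have hE : (J.restrictScalars R).colon (Submodule.span R {q}) = ⊤ := by
    by_contra hne
    obtain ⟨mx, hmx, hEm⟩ := Ideal.exists_le_maximal _ hne
    set p : PrimeSpectrum R := ⟨mx, hmx.isPrime⟩ with hp
    set S := p.asIdeal.primeCompl with hSdef
    obtain ⟨-, S', hS'hom, hker'⟩ := h p
    have h1 : pggEval (pggLocGrading 𝒜 S) t (pggTheta 𝒜 t S (pggLoc 𝒜 t S q)) = 0 := by
      rw [pggEval_theta, pggE_loc, hq0, TensorProduct.tmul_zero]
    have h2 : pggTheta 𝒜 t S (pggLoc 𝒜 t S q) ∈ Ideal.span S' := by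
      rw [← hker']
      exact RingHom.mem_ker.mpr h1
    have h3 : pggPhi 𝒜 t S (pggTheta 𝒜 t S (pggLoc 𝒜 t S q))
        ∈ Ideal.span ((fun u => pggPhi 𝒜 t S u) '' S') := by
      have h3' := Ideal.mem_map_of_mem (pggPhi 𝒜 t S) h2
      rwa [Ideal.map_span] at h3'
    have h4 : pggLoc 𝒜 t S q - pggPhi 𝒜 t S (pggTheta 𝒜 t S (pggLoc 𝒜 t S q))
        ∈ Ideal.span (Set.range fun v : PggVars 𝒜 t =>
            X v - pggSigma 𝒜 t S (pggG 𝒜 t S v)) := by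
      have h4' := pgg_algHom_sub_mem (AlgHom.id (Localization S) _)
        ((pggPhi 𝒜 t S).comp (pggTheta 𝒜 t S)) (pggLoc 𝒜 t S q)
      simpa [pggTheta, pggPhi, aeval_X] using h4'
    set K : Set (MvPolynomial (PggVars 𝒜 t) (Localization S)) :=
      {u | pggE 𝒜 t S u = 0 ∧ ∃ n ≤ t, IsWeightedHomogeneous (pggWeight 𝒜 t) u n} with hK
    have h5 : (fun u => pggPhi 𝒜 t S u) '' S' ⊆ K := by
      rintro _ ⟨u, hu, rfl⟩
      constructor
      · rw [pggE_phi]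
        have hu' : u ∈ RingHom.ker (pggEval (pggLocGrading 𝒜 S) t) := by
          rw [hker']; exact Ideal.subset_span hu
        exact RingHom.mem_ker.mp hu'
      · obtain ⟨n, hn, hhom⟩ := hS'hom u hu
        exact ⟨n, hn, pggPhi_hom 𝒜 t S hhom⟩
    have h6 : (Set.range fun v : PggVars 𝒜 t =>
        X v - pggSigma 𝒜 t S (pggG 𝒜 t S v)) ⊆ K := by
      rintro _ ⟨v, rfl⟩
      constructor
      · rw [map_sub]
        have hXv : pggE 𝒜 t S (X v) = (1 : Localization S) ⊗ₜ[R] (v.2 : A) := by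
          rw [pggE, aeval_X]
        rw [hXv, pggSigma_eval]
        show (1 : Localization S) ⊗ₜ[R] (v.2 : A) - (((pggG 𝒜 t S v).2 : _)) = 0
        rw [sub_eq_zero]
        rfl
      · refine ⟨(v.1 : ℕ), v.1.2.2, ?_⟩
        have hmem : (X v - pggSigma 𝒜 t S (pggG 𝒜 t S v))
            ∈ weightedHomogeneousSubmodule (Localization S) (pggWeight 𝒜 t) (v.1 : ℕ) :=
          sub_mem (isWeightedHomogeneous_X _ _ _) (pggSigma_hom 𝒜 t S (pggG 𝒜 t S v))
        exact hmem
    have h7 : pggLoc 𝒜 t S q ∈ Ideal.span K := by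
      have hqe : pggLoc 𝒜 t S q
          = (pggLoc 𝒜 t S q - pggPhi 𝒜 t S (pggTheta 𝒜 t S (pggLoc 𝒜 t S q)))
            + pggPhi 𝒜 t S (pggTheta 𝒜 t S (pggLoc 𝒜 t S q)) := by ring
      rw [hqe]
      exact add_mem (Ideal.span_mono h6 h4) (Ideal.span_mono h5 h3)
    obtain ⟨c, hcsupp, hcsum⟩ := Submodule.mem_span_set.mp h7
    have hsum' : ∑ u ∈ c.support, c u • u = pggLoc 𝒜 t S q := hcsum
    have hVB : ∀ u ∈ c.support, ∃ (s : S) (j : MvPolynomial (PggVars 𝒜 t) R),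
        j ∈ H ∧ pggLoc 𝒜 t S j = (s : R) • u := by
      intro u hu
      obtain ⟨h0, n, hn, hhom⟩ := hcsupp hu
      obtain ⟨s, j, hj, hloc⟩ := pgg_ker_e_homog 𝒜 t S u n hn hhom h0
      exact ⟨s, j, hj, hloc⟩
    choose sv jv hjvH hjvloc using hVB
    have hclear : ∀ u ∈ c.support, ∃ (d : S) (b : MvPolynomial (PggVars 𝒜 t) R),
        pggLoc 𝒜 t S b = (d : R) • c u := by
      intro u _
      obtain ⟨d, b, hb⟩ := pgg_loc_clear S (c u)
      exact ⟨d, b, by rw [pggLoc_eq]; exact hb⟩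
    choose dv bv hbv using hclear
    set D : S := ∏ u ∈ c.support.attach, (dv u.1 u.2 * sv u.1 u.2) with hD
    set y : MvPolynomial (PggVars 𝒜 t) R := ∑ u ∈ c.support.attach,
      ((∏ e ∈ c.support.attach.erase u, (dv e.1 e.2 * sv e.1 e.2) : S) : R)
        • (bv u.1 u.2 * jv u.1 u.2) with hy_def
    have hDq : pggLoc 𝒜 t S ((D : R) • q) = pggLoc 𝒜 t S y := by
      rw [map_smul, ← hsum', Finset.smul_sum,
        ← Finset.sum_attach c.support (fun u => (D : R) • (c u • u)),
        hy_def, map_sum]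
      apply Finset.sum_congr rfl
      intro u _
      rw [map_smul]
      have hsplit : D = dv u.1 u.2 * sv u.1 u.2 *
          ∏ e ∈ c.support.attach.erase u, (dv e.1 e.2 * sv e.1 e.2) :=
        (Finset.mul_prod_erase _ _ (Finset.mem_attach _ u)).symm
      rw [hsplit, Submonoid.coe_mul, mul_smul, smul_comm]
      congr 1
      rw [smul_eq_mul, Submonoid.coe_mul, ← smul_mul_smul_comm, ← hbv u.1 u.2,
        ← hjvloc u.1 u.2, ← map_mul]
    have hyJ : y ∈ J := by
      rw [hy_def]
      apply Submodule.sum_mem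
      intro u _
      have hjJ : jv u.1 u.2 ∈ J := hJ ▸ Ideal.subset_span (hjvH u.1 u.2)
      have hbj : bv u.1 u.2 * jv u.1 u.2 ∈ J := Ideal.mul_mem_left _ _ hjJ
      rw [smul_eq_C_mul]
      exact Ideal.mul_mem_left _ _ hbj
    obtain ⟨sp, hsp⟩ := pgg_loc_zero S ((D : R) • q - y)
      (by rw [← pggLoc_eq, map_sub, hDq, sub_self])
    have hfin : ((sp * D : S) : R) • q ∈ J := by
      have h8 : (sp : R) • ((D : R) • q - y) = 0 := hsp
      rw [smul_sub, sub_eq_zero] at h8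
      rw [Submonoid.coe_mul, mul_smul, h8, smul_eq_C_mul]
      exact Ideal.mul_mem_left _ _ hyJ
    exact (sp * D).2 (hEm (Submodule.mem_colon_span_singleton.mpr hfin))
  have h1 : (1 : R) ∈ (J.restrictScalars R).colon (Submodule.span R {q}) :=
    hE ▸ Submodule.mem_top
  have h2 := Submodule.mem_colon_span_singleton.mp h1
  rw [one_smul] at h2
  exact h2

end BackwardKer
open TensorProduct in
/-- **Proposition 5.14**: being `t`-pgg is local on the base: `A` is `t`-pgg over `R` iff for
every prime `p` of `R` the base change `A ⊗_R R_p` (grading: the `R_p`-span of the image of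
`𝒜 n`) is `t`-pgg over the localization `R_p`. -/
theorem stmt9 {R A : Type*} [CommRing R] [CommRing A] [Algebra R A]
    (𝒜 : ℕ → Submodule R A) [GradedAlgebra 𝒜]
    (h0 : 𝒜 0 = LinearMap.range (Algebra.linearMap R A))
    (t : ℕ) (ht : 1 ≤ t) :
    IsPgg 𝒜 t ↔
      ∀ p : PrimeSpectrum R,
        IsPgg (fun n => Submodule.span (Localization.AtPrime p.asIdeal)
          ((fun a => (1 : Localization.AtPrime p.asIdeal) ⊗ₜ[R] a) '' (𝒜 n : Set A))) t := by
  constructor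
  · intro hpgg p
    exact pgg_forward 𝒜 t p.asIdeal.primeCompl hpgg
  · intro h
    exact ⟨pgg_backward_surj 𝒜 t (fun p => h p),
      {q | pggEval 𝒜 t q = 0 ∧ ∃ n ≤ t, IsWeightedHomogeneous (pggWeight 𝒜 t) q n},
      fun q hq => hq.2, pgg_backward_ker 𝒜 t (fun p => h p)⟩
end

section
/- Let R be a commutative ring, A a t_A-pgg graded R-algebra and B a t_B-pgg graded R-algebra (t_A, t_B ≥ 1), with gradings 𝒜 and ℬ respectively. Equip the tensor product A ⊗_R B with the grading whose degree-n component is the sum over i + j = n of the images of 𝒜 i ⊗_R ℬ j in A ⊗_R B (assume this family of submodules makes A ⊗_R B a graded R-algebra). Then A ⊗_R B is a (t_A + t_B)-pgg R-algebra. -/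
/-!
Partially generated graded algebras (pgg).

A graded `R`-algebra `A` (grading `𝒜 : ℕ → Submodule R A`) is `t`-pgg if the evaluation
map from the (weighted) polynomial ring on variables `X_(i,a)` (`1 ≤ i ≤ t`, `a ∈ 𝒜 i`,
`X_(i,a)` of weight `i`) sending `X_(i,a) ↦ a` is surjective and its kernel is generated
by weighted-homogeneous polynomials of weighted degree at most `t`.
-/

open MvPolynomial

section Aux
variable {R : Type*} [CommRing R]

theorem aux_rename_wh {σ τ : Type*} (g : σ → τ) (w : σ → ℕ) (w' : τ → ℕ)
    (hw : ∀ v, w' (g v) = w v) {p : MvPolynomial σ R} {n : ℕ}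
    (hp : p.IsWeightedHomogeneous w n) :
    (rename g p).IsWeightedHomogeneous w' n := by
  intro d hd
  obtain ⟨u, rfl, hu⟩ := coeff_rename_ne_zero g p d hd
  rw [← hp hu]
  have h1 : (Finsupp.weight w') (Finsupp.mapDomain g u)
      = Finsupp.linearCombination ℕ (w' ∘ g) u :=
    Finsupp.linearCombination_mapDomain (R := ℕ) (v' := w') g u
  have h2 : w' ∘ g = w := funext hw
  rw [h1, h2]
  rfl

theorem aux_wh_sub {σ : Type*} {w : σ → ℕ} {p q : MvPolynomial σ R} {n : ℕ}
    (hp : p.IsWeightedHomogeneous w n) (hq : q.IsWeightedHomogeneous w n) :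
    (p - q).IsWeightedHomogeneous w n :=
  (weightedHomogeneousSubmodule R w n).sub_mem hp hq

theorem aux_aeval_mem {A : Type*} [CommRing A] [Algebra R A] (𝒜 : ℕ → Submodule R A)
    [SetLike.GradedMonoid 𝒜] {σ : Type*} (w : σ → ℕ) (f : σ → A)
    (hf : ∀ v, f v ∈ 𝒜 (w v)) {p : MvPolynomial σ R} {n : ℕ}
    (hp : p.IsWeightedHomogeneous w n) : aeval f p ∈ 𝒜 n := by
  rw [p.as_sum, map_sum]
  apply Submodule.sum_mem
  intro d hd
  rw [aeval_monomial]
  have hdeg : Finsupp.weight w d = n := hp (mem_support_iff.mp hd)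
  have hprod : (d.prod fun v k => f v ^ k) ∈ 𝒜 n := by
    rw [Finsupp.prod]
    have h := SetLike.prod_pow_mem_graded 𝒜 w f (fun v => d v)
      (F := d.support) (fun v _ => hf v)
    have hsum : (∑ v ∈ d.support, d v • w v) = n := by
      rw [← hdeg, Finsupp.weight_apply, Finsupp.sum]
    rwa [hsum] at h
  have := (𝒜 n).smul_mem (coeff d p) hprod
  rwa [Algebra.smul_def] at this

theorem aux_preimage {A : Type*} [CommRing A] [Algebra R A] (𝒜 : ℕ → Submodule R A)
    [GradedAlgebra 𝒜] {σ : Type*} (w : σ → ℕ) (f : σ → A)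
    (hf : ∀ v, f v ∈ 𝒜 (w v))
    (hsurj : Function.Surjective (aeval f : MvPolynomial σ R →ₐ[R] A))
    {j : ℕ} {a : A} (ha : a ∈ 𝒜 j) :
    ∃ q : MvPolynomial σ R, q.IsWeightedHomogeneous w j ∧ aeval f q = a := by
  classical
  obtain ⟨p, hp⟩ := hsurj a
  refine ⟨weightedHomogeneousComponent w j p,
    weightedHomogeneousComponent_isWeightedHomogeneous j p, ?_⟩
  have hfin := weightedHomogeneousComponent_finsupp p (w := w)
  have hps : (∑ m ∈ hfin.toFinset, weightedHomogeneousComponent w m p) = p := by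
    rw [← finsum_eq_sum _ hfin, sum_weightedHomogeneousComponent]
  have hmem : ∀ m : ℕ, aeval f (weightedHomogeneousComponent w m p) ∈ 𝒜 m := fun m =>
    aux_aeval_mem 𝒜 w f hf (weightedHomogeneousComponent_isWeightedHomogeneous m p)
  let proj : A →+ A :=
    { toFun := fun x => ((DirectSum.decompose 𝒜 x j : 𝒜 j) : A)
      map_zero' := by simp
      map_add' := fun x y => by simp }
  have key : proj a = a := DirectSum.decompose_of_mem_same 𝒜 ha
  have ha' : a = ∑ m ∈ hfin.toFinset, aeval f (weightedHomogeneousComponent w m p) := by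
    rw [← map_sum, hps, hp]
  have hproj : proj a = aeval f (weightedHomogeneousComponent w j p) := by
    rw [ha', map_sum]
    by_cases hj : j ∈ hfin.toFinset
    · rw [Finset.sum_eq_single_of_mem j hj]
      · exact DirectSum.decompose_of_mem_same 𝒜 (hmem j)
      · intro m _ hmj
        exact DirectSum.decompose_of_mem_ne 𝒜 (hmem m) hmj
    · have h0 : weightedHomogeneousComponent w j p = 0 := by
        simpa using (Set.Finite.mem_toFinset hfin).not.mp hj
      rw [Finset.sum_eq_zero, h0, map_zero]
      intro m hm
      refine DirectSum.decompose_of_mem_ne 𝒜 (hmem m) ?_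
      rintro rfl; exact hj hm
  exact hproj.symm.trans key

open TensorProduct in
theorem aux_ker_tensor {A B : Type*} [CommRing A] [Algebra R A]
    [CommRing B] [Algebra R B] {σA σB : Type*} (gA : σA → A) (gB : σB → B)
    (hsA : Function.Surjective (aeval gA : MvPolynomial σA R →ₐ[R] A))
    (hsB : Function.Surjective (aeval gB : MvPolynomial σB R →ₐ[R] B)) :
    RingHom.ker (aeval (R := R)
        (Sum.elim (fun v => gA v ⊗ₜ[R] (1 : B)) (fun v => (1 : A) ⊗ₜ[R] gB v)) :
        MvPolynomial (σA ⊕ σB) R →ₐ[R] A ⊗[R] B) ≤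
      Ideal.map (rename Sum.inl : MvPolynomial σA R →ₐ[R] MvPolynomial (σA ⊕ σB) R)
          (RingHom.ker (aeval gA : MvPolynomial σA R →ₐ[R] A)) ⊔
        Ideal.map (rename Sum.inr : MvPolynomial σB R →ₐ[R] MvPolynomial (σA ⊕ σB) R)
          (RingHom.ker (aeval gB : MvPolynomial σB R →ₐ[R] B)) := by
  intro q hq
  set g : σA ⊕ σB → A ⊗[R] B :=
    Sum.elim (fun v => gA v ⊗ₜ[R] (1 : B)) (fun v => (1 : A) ⊗ₜ[R] gB v) with hg
  set I : Ideal (MvPolynomial (σA ⊕ σB) R) :=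
    Ideal.map (rename Sum.inl : MvPolynomial σA R →ₐ[R] MvPolynomial (σA ⊕ σB) R)
        (RingHom.ker (aeval gA : MvPolynomial σA R →ₐ[R] A)) ⊔
      Ideal.map (rename Sum.inr : MvPolynomial σB R →ₐ[R] MvPolynomial (σA ⊕ σB) R)
        (RingHom.ker (aeval gB : MvPolynomial σB R →ₐ[R] B)) with hI
  have hIA : ∀ x ∈ RingHom.ker (aeval gA : MvPolynomial σA R →ₐ[R] A),
      ((Ideal.Quotient.mkₐ R I).comp
        (rename Sum.inl : MvPolynomial σA R →ₐ[R] MvPolynomial (σA ⊕ σB) R)) x = 0 := by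
    intro x hx
    have hmem : rename Sum.inl x ∈ I := Ideal.mem_sup_left (Ideal.mem_map_of_mem _ hx)
    show Ideal.Quotient.mkₐ R I _ = 0
    rw [Ideal.Quotient.mkₐ_eq_mk, Ideal.Quotient.eq_zero_iff_mem]
    exact hmem
  have hIB : ∀ x ∈ RingHom.ker (aeval gB : MvPolynomial σB R →ₐ[R] B),
      ((Ideal.Quotient.mkₐ R I).comp
        (rename Sum.inr : MvPolynomial σB R →ₐ[R] MvPolynomial (σA ⊕ σB) R)) x = 0 := by
    intro x hx
    have hmem : rename Sum.inr x ∈ I := Ideal.mem_sup_right (Ideal.mem_map_of_mem _ hx)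
    show Ideal.Quotient.mkₐ R I _ = 0
    rw [Ideal.Quotient.mkₐ_eq_mk, Ideal.Quotient.eq_zero_iff_mem]
    exact hmem
  let ψA : A →ₐ[R] MvPolynomial (σA ⊕ σB) R ⧸ I :=
    (Ideal.Quotient.liftₐ _ _ hIA).comp (Ideal.quotientKerAlgEquivOfSurjective hsA).symm.toAlgHom
  let ψB : B →ₐ[R] MvPolynomial (σA ⊕ σB) R ⧸ I :=
    (Ideal.Quotient.liftₐ _ _ hIB).comp (Ideal.quotientKerAlgEquivOfSurjective hsB).symm.toAlgHom
  have hψA : ∀ x, ψA (aeval gA x) = Ideal.Quotient.mk I (rename Sum.inl x) := by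
    intro x
    have h1 : (Ideal.quotientKerAlgEquivOfSurjective hsA).symm (aeval gA x)
        = Ideal.Quotient.mk _ x := by
      rw [AlgEquiv.symm_apply_eq]
      exact (RingHom.kerLift_mk _ _).symm
    show (Ideal.Quotient.liftₐ _ _ hIA) ((Ideal.quotientKerAlgEquivOfSurjective hsA).symm
      (aeval gA x)) = _
    rw [h1]
    simp [Ideal.Quotient.liftₐ_apply, Ideal.Quotient.lift_mk]
    rfl
  have hψB : ∀ x, ψB (aeval gB x) = Ideal.Quotient.mk I (rename Sum.inr x) := by
    intro x
    have h1 : (Ideal.quotientKerAlgEquivOfSurjective hsB).symm (aeval gB x)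
        = Ideal.Quotient.mk _ x := by
      rw [AlgEquiv.symm_apply_eq]
      exact (RingHom.kerLift_mk _ _).symm
    show (Ideal.Quotient.liftₐ _ _ hIB) ((Ideal.quotientKerAlgEquivOfSurjective hsB).symm
      (aeval gB x)) = _
    rw [h1]
    simp [Ideal.Quotient.liftₐ_apply, Ideal.Quotient.lift_mk]
    rfl
  let ψ : A ⊗[R] B →ₐ[R] MvPolynomial (σA ⊕ σB) R ⧸ I :=
    Algebra.TensorProduct.productMap ψA ψB
  have hcomp : ψ.comp (aeval g) = Ideal.Quotient.mkₐ R I := by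
    apply MvPolynomial.algHom_ext
    rintro (v | v)
    · have h1 := hψA (X v)
      rw [aeval_X] at h1
      show ψ (aeval g (X (Sum.inl v))) = _
      rw [aeval_X]
      show ψ (gA v ⊗ₜ[R] (1 : B)) = _
      rw [Algebra.TensorProduct.productMap_apply_tmul, map_one, mul_one, h1, rename_X]
      rfl
    · have h1 := hψB (X v)
      rw [aeval_X] at h1
      show ψ (aeval g (X (Sum.inr v))) = _
      rw [aeval_X]
      show ψ ((1 : A) ⊗ₜ[R] gB v) = _
      rw [Algebra.TensorProduct.productMap_apply_tmul, map_one, one_mul, h1, rename_X]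
      rfl
  have hq0 : aeval g q = 0 := hq
  have hmk : Ideal.Quotient.mk I q = 0 := by
    have h2 := DFunLike.congr_fun hcomp q
    simp only [AlgHom.comp_apply, Ideal.Quotient.mkₐ_eq_mk] at h2
    rw [← h2, hq0, map_zero]
  exact (Ideal.Quotient.eq_zero_iff_mem).mp hmk

end Aux

set_option maxHeartbeats 1000000 in
set_option synthInstance.maxHeartbeats 400000 in
open TensorProduct in
/-- **Proposition 5.17**: the tensor product of a `t_A`-pgg algebra with a `t_B`-pgg algebra
is `(t_A + t_B)`-pgg, for the grading whose degree-`n` component is the sum over `i + j = n`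
of the images of `𝒜 i ⊗ ℬ j` (assumed to be a grading of `A ⊗_R B`). -/
theorem stmt12 {R A B : Type*} [CommRing R] [CommRing A] [Algebra R A]
    [CommRing B] [Algebra R B]
    (𝒜 : ℕ → Submodule R A) [GradedAlgebra 𝒜]
    (h0A : 𝒜 0 = LinearMap.range (Algebra.linearMap R A))
    (ℬ : ℕ → Submodule R B) [GradedAlgebra ℬ]
    (h0B : ℬ 0 = LinearMap.range (Algebra.linearMap R B))
    (tA tB : ℕ) (htA : 1 ≤ tA) (htB : 1 ≤ tB)
    (hA : IsPgg 𝒜 tA) (hB : IsPgg ℬ tB)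
    (hgraded : GradedAlgebra (fun n => Submodule.span R
      {x : A ⊗[R] B | ∃ i j : ℕ, i + j = n ∧ ∃ a ∈ 𝒜 i, ∃ b ∈ ℬ j, x = a ⊗ₜ[R] b})) :
    IsPgg (fun n => Submodule.span R
      {x : A ⊗[R] B | ∃ i j : ℕ, i + j = n ∧ ∃ a ∈ 𝒜 i, ∃ b ∈ ℬ j, x = a ⊗ₜ[R] b})
      (tA + tB) := by
  classical
  set t : ℕ := tA + tB with ht
  set 𝒞 : ℕ → Submodule R (A ⊗[R] B) := fun n => Submodule.span R
      {x : A ⊗[R] B | ∃ i j : ℕ, i + j = n ∧ ∃ a ∈ 𝒜 i, ∃ b ∈ ℬ j, x = a ⊗ₜ[R] b} with h𝒞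
  haveI hCgr : GradedAlgebra 𝒞 := hgraded
  -- the maps on variables
  have memA : ∀ v : PggVars 𝒜 tA, ((v.2 : A) ⊗ₜ[R] (1 : B)) ∈ 𝒞 (v.1 : ℕ) := by
    intro v
    exact Submodule.subset_span ⟨(v.1 : ℕ), 0, add_zero _, (v.2 : A), v.2.2, 1,
      SetLike.one_mem_graded ℬ, rfl⟩
  have memB : ∀ v : PggVars ℬ tB, ((1 : A) ⊗ₜ[R] (v.2 : B)) ∈ 𝒞 (v.1 : ℕ) := by
    intro v
    exact Submodule.subset_span ⟨0, (v.1 : ℕ), zero_add _, 1, SetLike.one_mem_graded 𝒜,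
      (v.2 : B), v.2.2, rfl⟩
  set φA : PggVars 𝒜 tA → PggVars 𝒞 t := fun v =>
    ⟨⟨(v.1 : ℕ), v.1.2.1, le_trans v.1.2.2 (Nat.le_add_right tA tB)⟩,
     ⟨(v.2 : A) ⊗ₜ[R] (1 : B), memA v⟩⟩ with hφA
  set φB : PggVars ℬ tB → PggVars 𝒞 t := fun v =>
    ⟨⟨(v.1 : ℕ), v.1.2.1, le_trans v.1.2.2 (Nat.le_add_left tB tA)⟩,
     ⟨(1 : A) ⊗ₜ[R] (v.2 : B), memB v⟩⟩ with hφB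
  -- evaluation compositions
  have hcompA : ∀ p : MvPolynomial (PggVars 𝒜 tA) R,
      pggEval 𝒞 t (rename φA p) = (pggEval 𝒜 tA p) ⊗ₜ[R] (1 : B) := by
    intro p
    induction p using MvPolynomial.induction_on with
    | C r =>
      rw [rename_C]
      show aeval (fun v : PggVars 𝒞 t => (v.2 : A ⊗[R] B)) (C r)
        = (aeval (fun v : PggVars 𝒜 tA => (v.2 : A)) (C r)) ⊗ₜ[R] (1 : B)
      rw [aeval_C, aeval_C, Algebra.TensorProduct.algebraMap_apply]
    | add p q hp hq =>
      rw [map_add, map_add, hp, hq, map_add, TensorProduct.add_tmul]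
    | mul_X p v hp =>
      rw [map_mul, rename_X, map_mul, hp, map_mul]
      have hX1 : pggEval 𝒞 t (X (φA v)) = (v.2 : A) ⊗ₜ[R] (1 : B) := by
        show aeval (fun u : PggVars 𝒞 t => (u.2 : A ⊗[R] B)) (X (φA v)) = _
        rw [aeval_X]
      have hX2 : pggEval 𝒜 tA (X v) = (v.2 : A) := by
        show aeval (fun u : PggVars 𝒜 tA => (u.2 : A)) (X v) = _
        rw [aeval_X]
      rw [hX1, hX2, Algebra.TensorProduct.tmul_mul_tmul, one_mul]
  have hcompB : ∀ p : MvPolynomial (PggVars ℬ tB) R,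
      pggEval 𝒞 t (rename φB p) = (1 : A) ⊗ₜ[R] (pggEval ℬ tB p) := by
    intro p
    induction p using MvPolynomial.induction_on with
    | C r =>
      rw [rename_C]
      show aeval (fun v : PggVars 𝒞 t => (v.2 : A ⊗[R] B)) (C r)
        = (1 : A) ⊗ₜ[R] (aeval (fun v : PggVars ℬ tB => (v.2 : B)) (C r))
      rw [aeval_C, aeval_C, Algebra.TensorProduct.algebraMap_apply']
    | add p q hp hq =>
      rw [map_add, map_add, hp, hq, map_add, TensorProduct.tmul_add]
    | mul_X p v hp =>
      rw [map_mul, rename_X, map_mul, hp, map_mul]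
      have hX1 : pggEval 𝒞 t (X (φB v)) = (1 : A) ⊗ₜ[R] (v.2 : B) := by
        show aeval (fun u : PggVars 𝒞 t => (u.2 : A ⊗[R] B)) (X (φB v)) = _
        rw [aeval_X]
      have hX2 : pggEval ℬ tB (X v) = (v.2 : B) := by
        show aeval (fun u : PggVars ℬ tB => (u.2 : B)) (X v) = _
        rw [aeval_X]
      rw [hX1, hX2, Algebra.TensorProduct.tmul_mul_tmul, one_mul]
  constructor
  · -- surjectivity
    intro x
    induction x using TensorProduct.induction_on with
    | zero => exact ⟨0, map_zero _⟩
    | tmul a b =>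
      obtain ⟨p, hp⟩ := hA.1 a
      obtain ⟨q, hq⟩ := hB.1 b
      refine ⟨rename φA p * rename φB q, ?_⟩
      rw [map_mul, hcompA, hcompB, hp, hq, Algebra.TensorProduct.tmul_mul_tmul,
        mul_one, one_mul]
    | add x y hx hy =>
      obtain ⟨p, hp⟩ := hx
      obtain ⟨q, hq⟩ := hy
      exact ⟨p + q, by rw [map_add, hp, hq]⟩
  · -- kernel
    set w : PggVars 𝒞 t → ℕ := pggWeight 𝒞 t with hwdef
    set S : Set (MvPolynomial (PggVars 𝒞 t) R) :=
      {p | (∃ n ≤ t, p.IsWeightedHomogeneous w n) ∧ pggEval 𝒞 t p = 0} with hS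
    refine ⟨S, fun p hp => hp.1, ?_⟩
    set J : Ideal (MvPolynomial (PggVars 𝒞 t) R) := Ideal.span S with hJ
    have hJker : J ≤ RingHom.ker (pggEval 𝒞 t) := by
      rw [hJ, Ideal.span_le]
      intro p hp
      exact hp.2
    have hrel : ∀ p : MvPolynomial (PggVars 𝒞 t) R, pggEval 𝒞 t p = 0 →
        (∃ n ≤ t, p.IsWeightedHomogeneous w n) → Ideal.Quotient.mk J p = 0 := by
      intro p h1 h2
      rw [Ideal.Quotient.eq_zero_iff_mem]
      exact Ideal.subset_span ⟨h2, h1⟩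
    have hrel2 : ∀ p q : MvPolynomial (PggVars 𝒞 t) R, pggEval 𝒞 t p = pggEval 𝒞 t q →
        (∃ n, n ≤ t ∧ p.IsWeightedHomogeneous w n ∧ q.IsWeightedHomogeneous w n) →
        Ideal.Quotient.mk J p = Ideal.Quotient.mk J q := by
      rintro p q h1 ⟨n, hn, hp, hq⟩
      have h := hrel (p - q) (by rw [map_sub, h1, sub_self]) ⟨n, hn, aux_wh_sub hp hq⟩
      rw [map_sub, sub_eq_zero] at h
      exact h
    set Φ : MvPolynomial (PggVars 𝒜 tA ⊕ PggVars ℬ tB) R →ₐ[R]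
        MvPolynomial (PggVars 𝒞 t) R := rename (Sum.elim φA φB) with hΦ
    have hwX : ∀ v : PggVars 𝒞 t, (X (R := R) v).IsWeightedHomogeneous w (v.1 : ℕ) :=
      fun v => isWeightedHomogeneous_X R w v
    -- every variable is in the range of Φ modulo J
    have hXrange : ∀ v : PggVars 𝒞 t,
        Ideal.Quotient.mk J (X v) ∈ ((Ideal.Quotient.mkₐ R J).comp Φ).range := by
      rintro ⟨⟨i, hi1, hi2⟩, c⟩
      obtain ⟨c, hc⟩ := c
      induction hc using Submodule.span_induction with
      | mem x hx =>
        obtain ⟨ia, jb, hij, a, ha, b, hb, rfl⟩ := hx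
        obtain ⟨qa, hqa_hom, hqa⟩ := aux_preimage 𝒜 (pggWeight 𝒜 tA)
          (fun v => (v.2 : A)) (fun v => v.2.2) hA.1 ha
        obtain ⟨qb, hqb_hom, hqb⟩ := aux_preimage ℬ (pggWeight ℬ tB)
          (fun v => (v.2 : B)) (fun v => v.2.2) hB.1 hb
        have hqa' : pggEval 𝒜 tA qa = a := hqa
        have hqb' : pggEval ℬ tB qb = b := hqb
        refine ⟨rename Sum.inl qa * rename Sum.inr qb, ?_⟩
        show Ideal.Quotient.mkₐ R J (Φ _) = _
        rw [Ideal.Quotient.mkₐ_eq_mk, map_mul, hΦ, rename_rename, rename_rename,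
          Sum.elim_comp_inl, Sum.elim_comp_inr]
        apply hrel2
        · rw [map_mul, hcompA, hcompB, hqa', hqb', Algebra.TensorProduct.tmul_mul_tmul,
            mul_one, one_mul]
          show _ = aeval (fun v : PggVars 𝒞 t => (v.2 : A ⊗[R] B)) (X _)
          rw [aeval_X]
        · refine ⟨i, hi2, ?_, hwX _⟩
          have h1 : (rename φA qa).IsWeightedHomogeneous w ia :=
            aux_rename_wh φA (pggWeight 𝒜 tA) w (fun v => rfl) hqa_hom
          have h2 : (rename φB qb).IsWeightedHomogeneous w jb :=
            aux_rename_wh φB (pggWeight ℬ tB) w (fun v => rfl) hqb_hom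
          have := h1.mul h2
          rwa [hij] at this
      | zero =>
        have h0 : Ideal.Quotient.mk J (X (R := R)
            (⟨⟨i, hi1, hi2⟩, ⟨0, Submodule.zero_mem _⟩⟩ : PggVars 𝒞 t)) = 0 := by
          apply hrel
          · show aeval (fun v : PggVars 𝒞 t => (v.2 : A ⊗[R] B)) (X _) = 0
            rw [aeval_X]
          · exact ⟨i, hi2, hwX _⟩
        rw [h0]
        exact zero_mem _
      | add x y hx hy ihx ihy =>
        have h1 : Ideal.Quotient.mk J (X (R := R)
              (⟨⟨i, hi1, hi2⟩, ⟨x + y, Submodule.add_mem _ hx hy⟩⟩ : PggVars 𝒞 t))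
            = Ideal.Quotient.mk J (X (⟨⟨i, hi1, hi2⟩, ⟨x, hx⟩⟩ : PggVars 𝒞 t))
              + Ideal.Quotient.mk J (X (⟨⟨i, hi1, hi2⟩, ⟨y, hy⟩⟩ : PggVars 𝒞 t)) := by
          have h := hrel (X (⟨⟨i, hi1, hi2⟩, ⟨x + y, Submodule.add_mem _ hx hy⟩⟩ : PggVars 𝒞 t)
              - X (⟨⟨i, hi1, hi2⟩, ⟨x, hx⟩⟩ : PggVars 𝒞 t)
              - X (⟨⟨i, hi1, hi2⟩, ⟨y, hy⟩⟩ : PggVars 𝒞 t)) ?_ ?_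
          · rw [map_sub, map_sub, sub_sub, sub_eq_zero] at h
            exact h
          · show aeval (fun v : PggVars 𝒞 t => (v.2 : A ⊗[R] B)) _ = 0
            rw [map_sub, map_sub, aeval_X, aeval_X, aeval_X]
            show x + y - x - y = 0
            ring
          · exact ⟨i, hi2, aux_wh_sub (aux_wh_sub (hwX _) (hwX _)) (hwX _)⟩
        rw [h1]
        exact add_mem ihx ihy
      | smul r x hx ihx =>
        have h1 : Ideal.Quotient.mk J (X (R := R)
              (⟨⟨i, hi1, hi2⟩, ⟨r • x, Submodule.smul_mem _ r hx⟩⟩ : PggVars 𝒞 t))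
            = Ideal.Quotient.mk J (C r * X (⟨⟨i, hi1, hi2⟩, ⟨x, hx⟩⟩ : PggVars 𝒞 t)) := by
          apply hrel2
          · rw [map_mul]
            show aeval (fun v : PggVars 𝒞 t => (v.2 : A ⊗[R] B)) (X _)
              = aeval (fun v : PggVars 𝒞 t => (v.2 : A ⊗[R] B)) (C r)
                * aeval (fun v : PggVars 𝒞 t => (v.2 : A ⊗[R] B)) (X _)
            rw [aeval_X, aeval_X, aeval_C]
            show r • x = _
            rw [Algebra.smul_def]
          · refine ⟨i, hi2, hwX _, ?_⟩
            have := (isWeightedHomogeneous_C w r).mul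
              (hwX (⟨⟨i, hi1, hi2⟩, ⟨x, hx⟩⟩ : PggVars 𝒞 t))
            rwa [zero_add] at this
        rw [h1, map_mul]
        refine mul_mem ?_ ihx
        have : (Ideal.Quotient.mk J) (C r)
            = algebraMap R (MvPolynomial (PggVars 𝒞 t) R ⧸ J) r := rfl
        rw [this]
        exact Subalgebra.algebraMap_mem _ r
    -- surjectivity of the composition onto the quotient
    have hsurjΦ : ∀ y : MvPolynomial (PggVars 𝒞 t) R ⧸ J,
        ∃ q, Ideal.Quotient.mk J (Φ q) = y := by
      intro y
      obtain ⟨p, rfl⟩ := Ideal.Quotient.mk_surjective y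
      have hmem : Ideal.Quotient.mk J p ∈ ((Ideal.Quotient.mkₐ R J).comp Φ).range := by
        induction p using MvPolynomial.induction_on with
        | C r =>
          refine ⟨C r, ?_⟩
          show Ideal.Quotient.mkₐ R J (Φ (C r)) = _
          rw [hΦ, rename_C]
          rfl
        | add p q hp hq => rw [map_add]; exact add_mem hp hq
        | mul_X p v hp => rw [map_mul]; exact mul_mem hp (hXrange v)
      obtain ⟨q, hq⟩ := hmem
      exact ⟨q, hq⟩
    -- relations from A and B
    obtain ⟨SA, hSA1, hSA2⟩ := hA.2
    obtain ⟨SB, hSB1, hSB2⟩ := hB.2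
    have hmapA : ∀ s ∈ RingHom.ker (pggEval 𝒜 tA), rename φA s ∈ J := by
      intro s hs
      have h1 : rename φA s ∈ Ideal.map
          (rename φA : MvPolynomial (PggVars 𝒜 tA) R →ₐ[R] MvPolynomial (PggVars 𝒞 t) R)
          (RingHom.ker (pggEval 𝒜 tA)) := Ideal.mem_map_of_mem _ hs
      rw [hSA2, Ideal.map_span] at h1
      refine Ideal.span_le.mpr ?_ h1
      rintro _ ⟨sa, hsa, rfl⟩
      apply Ideal.subset_span
      obtain ⟨n, hn, hhom⟩ := hSA1 sa hsa
      constructor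
      · exact ⟨n, le_trans hn (Nat.le_add_right tA tB),
          aux_rename_wh φA (pggWeight 𝒜 tA) w (fun v => rfl) hhom⟩
      · have hsa0 : pggEval 𝒜 tA sa = 0 := by
          have : sa ∈ RingHom.ker (pggEval 𝒜 tA) := hSA2 ▸ Ideal.subset_span hsa
          exact this
        show pggEval 𝒞 t (rename φA sa) = 0
        rw [hcompA, hsa0, TensorProduct.zero_tmul]
    have hmapB : ∀ s ∈ RingHom.ker (pggEval ℬ tB), rename φB s ∈ J := by
      intro s hs
      have h1 : rename φB s ∈ Ideal.map
          (rename φB : MvPolynomial (PggVars ℬ tB) R →ₐ[R] MvPolynomial (PggVars 𝒞 t) R)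
          (RingHom.ker (pggEval ℬ tB)) := Ideal.mem_map_of_mem _ hs
      rw [hSB2, Ideal.map_span] at h1
      refine Ideal.span_le.mpr ?_ h1
      rintro _ ⟨sb, hsb, rfl⟩
      apply Ideal.subset_span
      obtain ⟨n, hn, hhom⟩ := hSB1 sb hsb
      constructor
      · exact ⟨n, le_trans hn (Nat.le_add_left tB tA),
          aux_rename_wh φB (pggWeight ℬ tB) w (fun v => rfl) hhom⟩
      · have hsb0 : pggEval ℬ tB sb = 0 := by
          have : sb ∈ RingHom.ker (pggEval ℬ tB) := hSB2 ▸ Ideal.subset_span hsb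
          exact this
        show pggEval 𝒞 t (rename φB sb) = 0
        rw [hcompB, hsb0, TensorProduct.tmul_zero]
    -- conclude
    refine le_antisymm ?_ hJker
    intro p hp
    obtain ⟨q, hq⟩ := hsurjΦ (Ideal.Quotient.mk J p)
    have hsub : p - Φ q ∈ J := by
      have := (Ideal.Quotient.eq (I := J)).mp hq
      have h2 : -(Φ q - p) ∈ J := J.neg_mem this
      rwa [neg_sub] at h2
    have hΦq0 : pggEval 𝒞 t (Φ q) = 0 := by
      have h1 : pggEval 𝒞 t p = 0 := hp
      have h2 : pggEval 𝒞 t (p - Φ q) = 0 := hJker hsub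
      rw [map_sub, h1, zero_sub, neg_eq_zero] at h2
      exact h2
    have hqker : q ∈ RingHom.ker (aeval (R := R)
        (Sum.elim (fun v : PggVars 𝒜 tA => (v.2 : A) ⊗ₜ[R] (1 : B))
          (fun v : PggVars ℬ tB => (1 : A) ⊗ₜ[R] (v.2 : B))) :
        MvPolynomial (PggVars 𝒜 tA ⊕ PggVars ℬ tB) R →ₐ[R] A ⊗[R] B) := by
      have hev : pggEval 𝒞 t (Φ q) = aeval
          (Sum.elim (fun v : PggVars 𝒜 tA => (v.2 : A) ⊗ₜ[R] (1 : B))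
            (fun v : PggVars ℬ tB => (1 : A) ⊗ₜ[R] (v.2 : B))) q := by
        show aeval (fun v : PggVars 𝒞 t => (v.2 : A ⊗[R] B)) (rename (Sum.elim φA φB) q) = _
        rw [aeval_rename]
        have hfun : ((fun v : PggVars 𝒞 t => (v.2 : A ⊗[R] B)) ∘ Sum.elim φA φB)
            = Sum.elim (fun v : PggVars 𝒜 tA => (v.2 : A) ⊗ₜ[R] (1 : B))
              (fun v : PggVars ℬ tB => (1 : A) ⊗ₜ[R] (v.2 : B)) := by
          funext v; cases v <;> rfl
        rw [hfun]
      show aeval _ q = 0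
      rw [← hev, hΦq0]
    have hker := aux_ker_tensor (fun v : PggVars 𝒜 tA => (v.2 : A))
      (fun v : PggVars ℬ tB => (v.2 : B)) hA.1 hB.1 hqker
    have hle : Ideal.map (rename Sum.inl :
          MvPolynomial (PggVars 𝒜 tA) R →ₐ[R] MvPolynomial (PggVars 𝒜 tA ⊕ PggVars ℬ tB) R)
          (RingHom.ker (pggEval 𝒜 tA)) ⊔
        Ideal.map (rename Sum.inr :
          MvPolynomial (PggVars ℬ tB) R →ₐ[R] MvPolynomial (PggVars 𝒜 tA ⊕ PggVars ℬ tB) R)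
          (RingHom.ker (pggEval ℬ tB)) ≤ Ideal.comap Φ J := by
      apply sup_le
      · rw [Ideal.map_le_iff_le_comap]
        intro s hs
        rw [Ideal.mem_comap, Ideal.mem_comap]
        show Φ (rename Sum.inl s) ∈ J
        rw [hΦ, rename_rename, Sum.elim_comp_inl]
        exact hmapA s hs
      · rw [Ideal.map_le_iff_le_comap]
        intro s hs
        rw [Ideal.mem_comap, Ideal.mem_comap]
        show Φ (rename Sum.inr s) ∈ J
        rw [hΦ, rename_rename, Sum.elim_comp_inr]
        exact hmapB s hs
    have hΦqJ : Φ q ∈ J := hle hker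
    have : p = (p - Φ q) + Φ q := by ring
    rw [this]
    exact J.add_mem hsub hΦqJ
end

section
/- Let R be a commutative ring, A a t_A-pgg graded R-algebra (t_A ≥ 1) with grading 𝒜, and J ⊆ A a homogeneous ideal (J is generated by its homogeneous elements) which is generated as an ideal by its homogeneous elements of degree at most t_J, i.e. J equals the ideal generated by ⋃_{1 ≤ i ≤ t_J} (J ∩ 𝒜 i). Equip the quotient A/J with the grading whose degree-n component is the image of 𝒜 n under the quotient map. Then A/J is a t-pgg graded R-algebra for t := max{t_A, t_J}. -/
/-!
Partially generated graded algebras (pgg).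

A graded `R`-algebra `A` (grading `𝒜 : ℕ → Submodule R A`) is `t`-pgg if the evaluation
map from the (weighted) polynomial ring on variables `X_(i,a)` (`1 ≤ i ≤ t`, `a ∈ 𝒜 i`,
`X_(i,a)` of weight `i`) sending `X_(i,a) ↦ a` is surjective and its kernel is generated
by weighted-homogeneous polynomials of weighted degree at most `t`.
-/

open MvPolynomial

section Aux

variable {R A : Type*} [CommRing R] [CommRing A] [Algebra R A]

lemma rename_isWeightedHomogeneous {σ τ : Type*} {w : σ → ℕ} {w' : τ → ℕ} (f : σ → τ)
    (hf : ∀ x, w' (f x) = w x) {p : MvPolynomial σ R} {n : ℕ}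
    (hp : p.IsWeightedHomogeneous w n) :
    (rename f p).IsWeightedHomogeneous w' n := by
  have hre : rename f p = ∑ d ∈ p.support, monomial (d.mapDomain f) (coeff d p) := by
    conv_lhs => rw [p.as_sum]
    rw [map_sum]
    simp [rename_monomial]
  rw [hre]
  apply MvPolynomial.IsWeightedHomogeneous.sum
  intro d hd
  apply isWeightedHomogeneous_monomial
  have hw : Finsupp.weight w d = n := hp (mem_support_iff.mp hd)
  rw [← hw]
  rw [Finsupp.weight_apply, Finsupp.weight_apply]
  rw [Finsupp.sum_mapDomain_index (by simp) (by intro a b₁ b₂; rw [add_smul])]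
  simp [hf]

lemma aeval_mem_graded (𝒜 : ℕ → Submodule R A) [GradedAlgebra 𝒜] {σ : Type*} (w : σ → ℕ)
    (g : σ → A) (hg : ∀ x, g x ∈ 𝒜 (w x)) {p : MvPolynomial σ R} {n : ℕ}
    (hp : p.IsWeightedHomogeneous w n) : aeval g p ∈ 𝒜 n := by
  have hre : aeval g p = ∑ d ∈ p.support, aeval g (monomial d (coeff d p)) := by
    conv_lhs => rw [p.as_sum]
    rw [map_sum]
  rw [hre]
  apply Submodule.sum_mem
  intro d hd
  rw [aeval_monomial]
  have hw : Finsupp.weight w d = n := hp (mem_support_iff.mp hd)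
  have h1 : (d.prod fun i k => g i ^ k) ∈ 𝒜 (Finsupp.weight w d) := by
    rw [Finsupp.weight_apply, Finsupp.sum, Finsupp.prod]
    exact SetLike.prod_pow_mem_graded 𝒜 w g d (fun k _ => hg k)
  have h2 := SetLike.mul_mem_graded (SetLike.algebraMap_mem_graded 𝒜 (coeff d p)) h1
  rwa [zero_add, hw] at h2

end Aux
section Aux2
variable {R A : Type*} [CommRing R] [CommRing A] [Algebra R A]

lemma aeval_weightedHomogeneousComponent (𝒜 : ℕ → Submodule R A) [GradedAlgebra 𝒜]
    {σ : Type*} (w : σ → ℕ) (g : σ → A) (hg : ∀ x, g x ∈ 𝒜 (w x)) (n : ℕ)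
    (q : MvPolynomial σ R) :
    aeval g (weightedHomogeneousComponent w n q)
      = (DirectSum.decompose 𝒜 (aeval g q) n : A) := by
  induction q using MvPolynomial.induction_on' with
  | monomial d r =>
    have hmon : (monomial d r : MvPolynomial σ R).IsWeightedHomogeneous w (Finsupp.weight w d) :=
      isWeightedHomogeneous_monomial _ _ _ rfl
    have hmem : aeval g (monomial d r) ∈ 𝒜 (Finsupp.weight w d) :=
      aeval_mem_graded 𝒜 w g hg hmon
    by_cases h : n = Finsupp.weight w d
    · subst h
      rw [hmon.weightedHomogeneousComponent_same, DirectSum.decompose_of_mem_same 𝒜 hmem]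
    · rw [hmon.weightedHomogeneousComponent_ne n h,
        DirectSum.decompose_of_mem_ne 𝒜 hmem (fun hh => h hh.symm), map_zero]
  | add p q hp hq =>
    rw [map_add, map_add, hp, hq, map_add, DirectSum.decompose_add]
    simp

lemma exists_homog_lift (𝒜 : ℕ → Submodule R A) [GradedAlgebra 𝒜] (tA : ℕ)
    (hsurj : Function.Surjective (pggEval 𝒜 tA)) (n : ℕ) (a : A) (ha : a ∈ 𝒜 n) :
    ∃ p : MvPolynomial (PggVars 𝒜 tA) R,
      p.IsWeightedHomogeneous (pggWeight 𝒜 tA) n ∧ pggEval 𝒜 tA p = a := by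
  obtain ⟨q, hq⟩ := hsurj a
  refine ⟨weightedHomogeneousComponent (pggWeight 𝒜 tA) n q,
    weightedHomogeneousComponent_isWeightedHomogeneous n q, ?_⟩
  have := aeval_weightedHomogeneousComponent 𝒜 (pggWeight 𝒜 tA)
    (fun v : PggVars 𝒜 tA => (v.2 : A)) (fun v => v.2.2) n q
  rw [pggEval] at hq ⊢
  rw [this, hq, DirectSum.decompose_of_mem_same 𝒜 ha]
end Aux2
set_option maxHeartbeats 1000000 in
/-- **Proposition 5.18**: the quotient of a `t_A`-pgg algebra by a homogeneous ideal `J`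
generated by its homogeneous elements of degree at most `t_J` is `max t_A t_J`-pgg, for the
grading whose degree-`n` component is the image of `𝒜 n` under the quotient map. -/
theorem stmt13 {R A : Type*} [CommRing R] [CommRing A] [Algebra R A]
    (𝒜 : ℕ → Submodule R A) [GradedAlgebra 𝒜]
    (h0 : 𝒜 0 = LinearMap.range (Algebra.linearMap R A))
    (tA : ℕ) (htA : 1 ≤ tA) (hA : IsPgg 𝒜 tA)
    (J : Ideal A) (tJ : ℕ)
    (hJ : J = Ideal.span (⋃ i ∈ Set.Icc 1 tJ, ((J : Set A) ∩ (𝒜 i : Set A)))) :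
    IsPgg (fun n => (𝒜 n).map (Ideal.Quotient.mkₐ R J).toLinearMap) (max tA tJ) := by
  classical
  obtain ⟨hsurjA, S, hShom, hSker⟩ := hA
  set t := max tA tJ with ht
  set 𝒜' : ℕ → Submodule R (A ⧸ J) :=
    fun n => (𝒜 n).map (Ideal.Quotient.mkₐ R J).toLinearMap with h𝒜'
  set U : Set A := ⋃ i ∈ Set.Icc 1 tJ, ((J : Set A) ∩ (𝒜 i : Set A)) with hUdef
  -- the variable renaming map
  have hρmem : ∀ v : PggVars 𝒜 tA, (Ideal.Quotient.mkₐ R J (v.2 : A)) ∈ 𝒜' (v.1 : ℕ) :=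
    fun v => Submodule.mem_map_of_mem v.2.2
  set ρ : PggVars 𝒜 tA → PggVars 𝒜' t := fun v =>
    ⟨⟨(v.1 : ℕ), ⟨v.1.2.1, le_trans v.1.2.2 (le_max_left tA tJ)⟩⟩,
      ⟨Ideal.Quotient.mkₐ R J (v.2 : A), hρmem v⟩⟩ with hρ
  have hcomp : ∀ p : MvPolynomial (PggVars 𝒜 tA) R,
      pggEval 𝒜' t (rename ρ p) = Ideal.Quotient.mkₐ R J (pggEval 𝒜 tA p) := by
    intro p
    rw [pggEval, pggEval, aeval_rename, ← AlgHom.comp_apply, comp_aeval]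
    rfl
  have hsurj' : Function.Surjective (pggEval 𝒜' t) := by
    intro x
    obtain ⟨y, rfl⟩ := Ideal.Quotient.mkₐ_surjective R J x
    obtain ⟨p, rfl⟩ := hsurjA y
    exact ⟨rename ρ p, hcomp p⟩
  -- homogeneous lifts of the variables of the quotient ring
  have hv : ∀ v : PggVars 𝒜' t, ∃ p : MvPolynomial (PggVars 𝒜 tA) R,
      p.IsWeightedHomogeneous (pggWeight 𝒜 tA) (v.1 : ℕ) ∧
      Ideal.Quotient.mkₐ R J (pggEval 𝒜 tA p) = (v.2 : A ⧸ J) := by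
    intro v
    obtain ⟨a, ha, hQa⟩ := Submodule.mem_map.mp v.2.2
    obtain ⟨p, hp1, hp2⟩ := exists_homog_lift 𝒜 tA hsurjA (v.1 : ℕ) a ha
    exact ⟨p, hp1, by rw [hp2]; exact hQa⟩
  choose q hq1 hq2 using hv
  -- homogeneous lifts of the generators of J
  have hUel : ∀ g : U, ∃ p : MvPolynomial (PggVars 𝒜 tA) R, ∃ i : ℕ, i ≤ tJ ∧
      p.IsWeightedHomogeneous (pggWeight 𝒜 tA) i ∧ pggEval 𝒜 tA p = (g : A) ∧
      (g : A) ∈ J := by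
    intro g
    have hg : (g : A) ∈ ⋃ i ∈ Set.Icc 1 tJ, ((J : Set A) ∩ (𝒜 i : Set A)) := g.2
    simp only [Set.mem_iUnion, Set.mem_inter_iff, Set.mem_Icc, SetLike.mem_coe] at hg
    obtain ⟨i, ⟨hi1, hi2⟩, hgJ, hgA⟩ := hg
    obtain ⟨p, hp1, hp2⟩ := exists_homog_lift 𝒜 tA hsurjA i (g : A) hgA
    exact ⟨p, i, hi2, hp1, hp2, hgJ⟩
  choose pb ib hib hpb1 hpb2 hpbJ using hUel
  have hwρ : ∀ x : PggVars 𝒜 tA, pggWeight 𝒜' t (ρ x) = pggWeight 𝒜 tA x := fun x => rfl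
  set S1 : Set (MvPolynomial (PggVars 𝒜' t) R) := (rename ρ) '' S with hS1
  set S2 : Set (MvPolynomial (PggVars 𝒜' t) R) :=
    Set.range fun g : U => rename ρ (pb g) with hS2
  set S3 : Set (MvPolynomial (PggVars 𝒜' t) R) :=
    Set.range fun v : PggVars 𝒜' t => X v - rename ρ (q v) with hS3
  refine ⟨hsurj', S1 ∪ S2 ∪ S3, ?_, ?_⟩
  · -- homogeneity of the generators
    rintro p ((⟨s, hs, rfl⟩ | ⟨g, rfl⟩) | ⟨v, rfl⟩)
    · obtain ⟨n, hn, hhom⟩ := hShom s hs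
      exact ⟨n, le_trans hn (le_max_left _ _),
        rename_isWeightedHomogeneous ρ hwρ hhom⟩
    · exact ⟨ib g, le_trans (hib g) (le_max_right _ _),
        rename_isWeightedHomogeneous ρ hwρ (hpb1 g)⟩
    · refine ⟨(v.1 : ℕ), v.1.2.2, ?_⟩
      have h1 : (X v : MvPolynomial (PggVars 𝒜' t) R).IsWeightedHomogeneous
          (pggWeight 𝒜' t) (v.1 : ℕ) := isWeightedHomogeneous_X R _ v
      have h2 := rename_isWeightedHomogeneous ρ hwρ (hq1 v)
      rw [← mem_weightedHomogeneousSubmodule] at h1 h2 ⊢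
      exact Submodule.sub_mem _ h1 h2
  · -- kernel equality
    have hle : Ideal.span (S1 ∪ S2 ∪ S3) ≤ RingHom.ker (pggEval 𝒜' t) := by
      rw [Ideal.span_le]
      rintro p ((⟨s, hs, rfl⟩ | ⟨g, rfl⟩) | ⟨v, rfl⟩) <;>
        simp only [SetLike.mem_coe, RingHom.mem_ker]
      · have hs0 : pggEval 𝒜 tA s = 0 := by
          have hsker : s ∈ RingHom.ker (pggEval 𝒜 tA) := hSker ▸ Ideal.subset_span hs
          exact hsker
        rw [hcomp, hs0, map_zero]
      · rw [hcomp, hpb2, Ideal.Quotient.mkₐ_eq_mk, Ideal.Quotient.eq_zero_iff_mem]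
        exact hpbJ g
      · rw [map_sub, hcomp, hq2, pggEval, aeval_X, sub_self]
    have step1 : ∀ f : MvPolynomial (PggVars 𝒜' t) R,
        f - rename ρ (aeval q f) ∈ Ideal.span (S1 ∪ S2 ∪ S3) := by
      intro f
      induction f using MvPolynomial.induction_on with
      | C r =>
        rw [aeval_C, AlgHom.commutes, MvPolynomial.algebraMap_eq, sub_self]
        exact Ideal.zero_mem _
      | add p p' ihp ihp' =>
        have hid : p + p' - rename ρ (aeval q p + aeval q p')
            = (p - rename ρ (aeval q p)) + (p' - rename ρ (aeval q p')) := by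
          rw [map_add]; ring
        rw [map_add, hid]
        exact Ideal.add_mem _ ihp ihp'
      | mul_X p v ih =>
        have hid : p * X v - rename ρ (aeval q p * q v)
            = (p - rename ρ (aeval q p)) * X v
              + rename ρ (aeval q p) * (X v - rename ρ (q v)) := by
          rw [map_mul]; ring
        rw [map_mul, aeval_X, hid]
        exact Ideal.add_mem _ (Ideal.mul_mem_right _ _ ih)
          (Ideal.mul_mem_left _ _ (Ideal.subset_span (Set.mem_union_right _ ⟨v, rfl⟩)))
    refine le_antisymm ?_ hle
    intro f hf
    set F := aeval q f with hF
    have hmemJ : pggEval 𝒜 tA F ∈ J := by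
      have h1 : rename ρ F ∈ RingHom.ker (pggEval 𝒜' t) := by
        have h3 := hle (step1 f)
        have h4 : rename ρ F = f - (f - rename ρ F) := by ring
        rw [h4]
        exact Ideal.sub_mem _ hf h3
      rw [RingHom.mem_ker, hcomp, Ideal.Quotient.mkₐ_eq_mk,
        Ideal.Quotient.eq_zero_iff_mem] at h1
      exact h1
    have hFmem : F ∈ Ideal.span (S ∪ Set.range pb) := by
      have hJspan : J = Ideal.map (pggEval 𝒜 tA) (Ideal.span (Set.range pb)) := by
        rw [Ideal.map_span, hJ]
        congr 1
        ext x
        constructor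
        · intro hx
          exact ⟨pb ⟨x, hx⟩, ⟨⟨x, hx⟩, rfl⟩, hpb2 ⟨x, hx⟩⟩
        · rintro ⟨_, ⟨g, rfl⟩, rfl⟩
          rw [hpb2 g]
          exact g.2
      rw [hJspan] at hmemJ
      obtain ⟨y, hy, hyF⟩ := (Ideal.mem_map_iff_of_surjective _ hsurjA).mp hmemJ
      have hker : F - y ∈ RingHom.ker (pggEval 𝒜 tA) := by
        rw [RingHom.mem_ker, map_sub, hyF, sub_self]
      rw [hSker] at hker
      have hid : F = (F - y) + y := by ring
      rw [hid]
      exact Ideal.add_mem _ (Ideal.span_mono Set.subset_union_left hker)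
        (Ideal.span_mono Set.subset_union_right hy)
    have h6 : Ideal.span (S ∪ Set.range pb)
        ≤ Ideal.comap (rename ρ : MvPolynomial (PggVars 𝒜 tA) R →ₐ[R] _)
            (Ideal.span (S1 ∪ S2 ∪ S3)) := by
      rw [Ideal.span_le]
      rintro x (hx | ⟨g, rfl⟩) <;> simp only [SetLike.mem_coe, Ideal.mem_comap]
      · exact Ideal.subset_span (Set.mem_union_left _ (Set.mem_union_left _ ⟨x, hx, rfl⟩))
      · exact Ideal.subset_span (Set.mem_union_left _ (Set.mem_union_right _ ⟨g, rfl⟩))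
    have h7 := h6 hFmem
    rw [Ideal.mem_comap] at h7
    have hid : f = (f - rename ρ F) + rename ρ F := by ring
    rw [hid]
    exact Ideal.add_mem _ (step1 f) h7
end

section
/- Let R be a commutative ring, t ≥ 1 an integer, and A a graded R-algebra (grading 𝒜, 𝒜 0 equal to the image of R) which is generated as an R-algebra by its homogeneous elements of degree at most t, i.e. Algebra.adjoin R (⋃_{1 ≤ i ≤ t} 𝒜 i) = A. Set d := (t+1)!. Then for every integer n ≥ 1, the degree-(n·d) component equals the n-th power of the degree-d component as submodules of A: 𝒜 (n·d) = (𝒜 d)^n, where (𝒜 d)^n denotes the R-submodule spanned by products of n elements of 𝒜 d. In other words, the d-th Veronese subalgebra A^{(d)} = ⊕_{n≥0} 𝒜 (n·d) is generated by its elements of degree one. -/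
/-!
Partially generated graded algebras (pgg).

A graded `R`-algebra `A` (grading `𝒜 : ℕ → Submodule R A`) is `t`-pgg if the evaluation
map from the (weighted) polynomial ring on variables `X_(i,a)` (`1 ≤ i ≤ t`, `a ∈ 𝒜 i`,
`X_(i,a)` of weight `i`) sending `X_(i,a) ↦ a` is surjective and its kernel is generated
by weighted-homogeneous polynomials of weighted degree at most `t`.
-/

open MvPolynomial

section Aux

/-- Any multiset has sub-multisets of every smaller cardinality. -/
private lemma exists_le_card_eq {α : Type*} (m : Multiset α) :
    ∀ n, n ≤ Multiset.card m → ∃ s ≤ m, Multiset.card s = n := by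
  induction m using Multiset.induction with
  | empty =>
    intro n hn
    simp only [Multiset.card_zero, Nat.le_zero] at hn
    exact ⟨0, le_rfl, by simp [hn]⟩
  | cons a m ih =>
    intro n hn
    cases n with
    | zero => exact ⟨0, Multiset.zero_le _, rfl⟩
    | succ k =>
      obtain ⟨s, hs, hc⟩ := ih k (by simpa using hn)
      exact ⟨a ::ₘ s, Multiset.cons_le_cons a hs, by simp [hc]⟩

/-- Pigeonhole: a multiset of weights in `[1,t]` with weight-sum at least `t·t!`
contains a sub-multiset of weight-sum exactly `t!`. -/
private lemma exists_block {α : Type*} (w : α → ℕ) (t : ℕ) (ht : 1 ≤ t) (m : Multiset α)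
    (hw : ∀ p ∈ m, w p ∈ Set.Icc 1 t) (hsum : t * t.factorial ≤ (m.map w).sum) :
    ∃ s ≤ m, (s.map w).sum = t.factorial := by
  classical
  have key : ∃ i, 1 ≤ i ∧ i ≤ t ∧ t.factorial / i ≤ (m.map w).count i := by
    by_contra hcon
    push_neg at hcon
    have hsub : (m.map w).toFinset ⊆ Finset.Icc 1 t := by
      intro a ha
      rw [Multiset.mem_toFinset] at ha
      obtain ⟨p, hp, rfl⟩ := Multiset.mem_map.1 ha
      have := hw p hp
      exact Finset.mem_Icc.2 ⟨this.1, this.2⟩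
    have hlt : (m.map w).sum ≤ t * (t.factorial - 1) := by
      calc (m.map w).sum = ∑ a ∈ (m.map w).toFinset, (m.map w).count a • a :=
            Finset.sum_multiset_count _
        _ ≤ ∑ a ∈ (m.map w).toFinset, (t.factorial - a) := by
            apply Finset.sum_le_sum
            intro a ha
            have hIcc := Finset.mem_Icc.1 (hsub ha)
            have hdvd : a ∣ t.factorial := Nat.dvd_factorial hIcc.1 hIcc.2
            have hc : (m.map w).count a < t.factorial / a := hcon a hIcc.1 hIcc.2
            have hle : (m.map w).count a ≤ t.factorial / a - 1 := by omega
            calc (m.map w).count a • a = (m.map w).count a * a := by rw [smul_eq_mul]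
              _ ≤ (t.factorial / a - 1) * a := Nat.mul_le_mul_right _ hle
              _ = t.factorial / a * a - a := by rw [Nat.sub_mul, one_mul]
              _ = t.factorial - a := by rw [Nat.div_mul_cancel hdvd]
        _ ≤ ∑ a ∈ Finset.Icc 1 t, (t.factorial - a) := Finset.sum_le_sum_of_subset hsub
        _ ≤ ∑ _a ∈ Finset.Icc 1 t, (t.factorial - 1) := by
            apply Finset.sum_le_sum
            intro a ha
            have := (Finset.mem_Icc.1 ha).1
            omega
        _ = t * (t.factorial - 1) := by
            rw [Finset.sum_const, Nat.card_Icc, smul_eq_mul, Nat.add_sub_cancel]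
    have h2 : t * t.factorial ≤ t * (t.factorial - 1) := le_trans hsum hlt
    have h3 : t.factorial ≤ t.factorial - 1 := Nat.le_of_mul_le_mul_left h2 (by omega)
    have := t.factorial_pos
    omega
  obtain ⟨i, hi1, hit, hcount⟩ := key
  have hdvd : i ∣ t.factorial := Nat.dvd_factorial hi1 hit
  have hcard : t.factorial / i ≤ Multiset.card (m.filter fun p => i = w p) := by
    rwa [Multiset.count_map] at hcount
  obtain ⟨s, hsle, hscard⟩ := exists_le_card_eq _ _ hcard
  refine ⟨s, hsle.trans (Multiset.filter_le _ m), ?_⟩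
  have hall : ∀ b ∈ s.map w, b = i := by
    intro b hb
    obtain ⟨p, hp, rfl⟩ := Multiset.mem_map.1 hb
    exact ((Multiset.mem_filter.1 (Multiset.mem_of_le hsle hp)).2).symm
  have hrep : s.map w = Multiset.replicate (t.factorial / i) i :=
    Multiset.eq_replicate.2 ⟨by rw [Multiset.card_map, hscard], hall⟩
  rw [hrep, Multiset.sum_replicate, smul_eq_mul, Nat.div_mul_cancel hdvd]

/-- Iterated extraction: weight-sum at least `t·t! + k·t!` gives a sub-multiset of
weight-sum exactly `k·t!`. -/
private lemma exists_extract {α : Type*} [DecidableEq α] (w : α → ℕ) (t : ℕ) (ht : 1 ≤ t) :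
    ∀ (k : ℕ) (m : Multiset α), (∀ p ∈ m, w p ∈ Set.Icc 1 t) →
      t * t.factorial + k * t.factorial ≤ (m.map w).sum →
      ∃ s ≤ m, (s.map w).sum = k * t.factorial := by
  intro k
  induction k with
  | zero => intro m _ _; exact ⟨0, Multiset.zero_le _, by simp⟩
  | succ k ih =>
    intro m hm hsum
    obtain ⟨s₁, hs₁, hsum₁⟩ := exists_block w t ht m hm (le_trans (Nat.le_add_right _ _) hsum)
    have hmm : ((m - s₁).map w).sum + t.factorial = (m.map w).sum := by
      have h1 : m - s₁ + s₁ = m := tsub_add_cancel_of_le hs₁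
      conv_rhs => rw [← h1]
      rw [Multiset.map_add, Multiset.sum_add, hsum₁]
    have hm2 : ∀ p ∈ m - s₁, w p ∈ Set.Icc 1 t :=
      fun p hp => hm p (Multiset.mem_of_le tsub_le_self hp)
    have hsum2 : t * t.factorial + k * t.factorial ≤ ((m - s₁).map w).sum := by
      have hk : (k + 1) * t.factorial = k * t.factorial + t.factorial := by ring
      rw [← hmm, hk, ← add_assoc] at hsum
      exact (add_le_add_iff_right _).mp hsum
    obtain ⟨s₂, hs₂, hsum₂⟩ := ih (m - s₁) hm2 hsum2
    refine ⟨s₁ + s₂, ?_, ?_⟩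
    · calc s₁ + s₂ ≤ s₁ + (m - s₁) := add_le_add_right hs₂ _
        _ = m := add_tsub_cancel_of_le hs₁
    · rw [Multiset.map_add, Multiset.sum_add, hsum₁, hsum₂]; ring

/-- A product of homogeneous elements is homogeneous of the sum of the degrees. -/
private lemma prod_mem_graded' {R A : Type*} [CommRing R] [CommRing A] [Algebra R A]
    (𝒜 : ℕ → Submodule R A) [GradedAlgebra 𝒜] :
    ∀ m : Multiset (A × ℕ), (∀ p ∈ m, p.1 ∈ 𝒜 p.2) →
      (m.map Prod.fst).prod ∈ 𝒜 (m.map Prod.snd).sum := by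
  intro m
  induction m using Multiset.induction with
  | empty => intro _; simpa using SetLike.one_mem_graded 𝒜
  | cons p m ih =>
    intro h
    rw [Multiset.map_cons, Multiset.map_cons, Multiset.prod_cons, Multiset.sum_cons]
    exact SetLike.mul_mem_graded (h p (Multiset.mem_cons_self p m))
      (ih fun q hq => h q (Multiset.mem_cons_of_mem hq))

/-- Key lemma: a product of homogeneous elements of degrees in `[1,t]` with total degree
`n·(t+1)!` (`n ≥ 1`) lies in `(𝒜 (t+1)!)ⁿ`. -/
private lemma prod_mem_pow {R A : Type*} [CommRing R] [CommRing A] [Algebra R A]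
    (𝒜 : ℕ → Submodule R A) [GradedAlgebra 𝒜] (t : ℕ) (ht : 1 ≤ t) :
    ∀ n : ℕ, 1 ≤ n → ∀ m : Multiset (A × ℕ),
      (∀ p ∈ m, p.1 ∈ 𝒜 p.2 ∧ p.2 ∈ Set.Icc 1 t) →
      (m.map Prod.snd).sum = n * (t + 1).factorial →
      (m.map Prod.fst).prod ∈ 𝒜 ((t + 1).factorial) ^ n := by
  classical
  intro n hn
  induction n, hn using Nat.le_induction with
  | base =>
    intro m hm hsum
    rw [pow_one]
    have h := prod_mem_graded' 𝒜 m fun p hp => (hm p hp).1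
    rwa [hsum, one_mul] at h
  | succ n hn ih =>
    intro m hm hsum
    have hfac : (t + 1).factorial = (t + 1) * t.factorial := Nat.factorial_succ t
    have hbound : t * t.factorial + (t + 1) * t.factorial ≤ (m.map Prod.snd).sum := by
      rw [hsum, hfac, ← mul_assoc]
      have h1 : t * t.factorial + (t + 1) * t.factorial = (2 * t + 1) * t.factorial := by ring
      rw [h1]
      exact Nat.mul_le_mul (by nlinarith) le_rfl
    obtain ⟨s, hsle, hssum⟩ :=
      exists_extract Prod.snd t ht (t + 1) m (fun p hp => (hm p hp).2) hbound
    have hssum' : (s.map Prod.snd).sum = (t + 1).factorial := by rw [hssum, hfac]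
    have hrest : ((m - s).map Prod.snd).sum = n * (t + 1).factorial := by
      have h1 : m - s + s = m := tsub_add_cancel_of_le hsle
      have h2 : ((m - s).map Prod.snd).sum + (s.map Prod.snd).sum = (m.map Prod.snd).sum := by
        conv_rhs => rw [← h1]
        rw [Multiset.map_add, Multiset.sum_add]
      rw [hssum', hsum] at h2
      have h3 : (n + 1) * (t + 1).factorial = n * (t + 1).factorial + (t + 1).factorial := by
        ring
      omega
    have hprods : (m.map Prod.fst).prod = (s.map Prod.fst).prod * ((m - s).map Prod.fst).prod := by
      conv_lhs => rw [← tsub_add_cancel_of_le hsle]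
      rw [Multiset.map_add, Multiset.prod_add, mul_comm]
    rw [hprods, pow_succ']
    refine Submodule.mul_mem_mul ?_
      (ih (m - s) (fun p hp => hm p (Multiset.mem_of_le tsub_le_self hp)) hrest)
    have h := prod_mem_graded' 𝒜 s fun p hp => (hm p (Multiset.mem_of_le hsle hp)).1
    rwa [hssum'] at h

end Aux

/-- The unnumbered Lemma in Section 5.3: if `A` is generated as an `R`-algebra by its
homogeneous elements of degree at most `t`, then, with `d := (t+1)!`, one has
`𝒜 (n·d) = (𝒜 d)ⁿ` for all `n ≥ 1`; i.e. the `d`-th Veronese subalgebra is generated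
by its elements of degree one. -/
theorem stmt15 {R A : Type*} [CommRing R] [CommRing A] [Algebra R A]
    (𝒜 : ℕ → Submodule R A) [GradedAlgebra 𝒜]
    (h0 : 𝒜 0 = LinearMap.range (Algebra.linearMap R A))
    (t : ℕ) (ht : 1 ≤ t)
    (hgen : Algebra.adjoin R (⋃ i ∈ Set.Icc 1 t, (𝒜 i : Set A)) = ⊤) :
    ∀ n : ℕ, 1 ≤ n → 𝒜 (n * (t + 1).factorial) = 𝒜 ((t + 1).factorial) ^ n := by
  intro n hn
  set S : Set A := ⋃ i ∈ Set.Icc 1 t, (𝒜 i : Set A) with hS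
  have hspan : Submodule.span R ((Submonoid.closure S : Submonoid A) : Set A) = ⊤ := by
    have h := Algebra.adjoin_eq_span (R := R) (s := S)
    rw [hgen, Algebra.top_toSubmodule] at h
    exact h.symm
  apply le_antisymm
  · -- 𝒜 (n·d) ≤ (𝒜 d)ⁿ
    have main : ∀ x : A,
        (DirectSum.decompose 𝒜 x (n * (t + 1).factorial) : A) ∈ 𝒜 ((t + 1).factorial) ^ n := by
      intro x
      have hx' : x ∈ Submodule.span R ((Submonoid.closure S : Submonoid A) : Set A) := by
        rw [hspan]; trivial
      induction hx' using Submodule.span_induction with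
      | mem y hy =>
        have hQ : ∃ m : Multiset (A × ℕ),
            (∀ p ∈ m, p.1 ∈ 𝒜 p.2 ∧ p.2 ∈ Set.Icc 1 t) ∧ (m.map Prod.fst).prod = y := by
          induction hy using Submonoid.closure_induction with
          | mem z hz =>
            rw [hS, Set.mem_iUnion₂] at hz
            obtain ⟨i, hi, hzi⟩ := hz
            exact ⟨{(z, i)}, by simpa using ⟨hzi, hi⟩, by simp⟩
          | one => exact ⟨0, by simp, by simp⟩
          | mul a b _ _ iha ihb =>
            obtain ⟨m₁, hm₁, hp₁⟩ := iha
            obtain ⟨m₂, hm₂, hp₂⟩ := ihb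
            refine ⟨m₁ + m₂, ?_, ?_⟩
            · intro p hp
              rcases Multiset.mem_add.1 hp with h | h
              exacts [hm₁ p h, hm₂ p h]
            · rw [Multiset.map_add, Multiset.prod_add, hp₁, hp₂]
        obtain ⟨mm, hmm, hprod⟩ := hQ
        have hy𝒜 : y ∈ 𝒜 ((mm.map Prod.snd).sum) :=
          hprod ▸ prod_mem_graded' 𝒜 mm fun p hp => (hmm p hp).1
        by_cases hdeg : (mm.map Prod.snd).sum = n * (t + 1).factorial
        · rw [DirectSum.decompose_of_mem_same 𝒜 (hdeg ▸ hy𝒜)]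
          exact hprod ▸ prod_mem_pow 𝒜 t ht n hn mm hmm hdeg
        · rw [DirectSum.decompose_of_mem_ne 𝒜 hy𝒜 hdeg]
          exact zero_mem _
      | zero =>
        simp only [DirectSum.decompose_zero, DirectSum.zero_apply, ZeroMemClass.coe_zero]
        exact zero_mem _
      | add x y hx hy ihx ihy =>
        simp only [DirectSum.decompose_add, DirectSum.add_apply, Submodule.coe_add]
        exact add_mem ihx ihy
      | smul r x hx ihx =>
        simp only [DirectSum.decompose_smul, DirectSum.smul_apply, Submodule.coe_smul]
        exact Submodule.smul_mem _ r ihx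
    intro x hx
    have h := main x
    rwa [DirectSum.decompose_of_mem_same 𝒜 hx] at h
  · -- (𝒜 d)ⁿ ≤ 𝒜 (n·d)
    clear hn
    induction n with
    | zero =>
      simp only [pow_zero, Nat.zero_mul]
      exact Submodule.one_le.2 (SetLike.one_mem_graded 𝒜)
    | succ k ih =>
      cases Nat.eq_zero_or_pos k with
      | inl h0k =>
        subst h0k
        simp
      | inr h0k =>
        rw [pow_succ]
        calc 𝒜 ((t + 1).factorial) ^ k * 𝒜 ((t + 1).factorial)
            ≤ 𝒜 (k * (t + 1).factorial) * 𝒜 ((t + 1).factorial) :=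
              mul_le_mul' ih le_rfl
          _ ≤ 𝒜 ((k + 1) * (t + 1).factorial) := by
              rw [Submodule.mul_le]
              intro a ha b hb
              have h := SetLike.mul_mem_graded ha hb
              have heq : k * (t + 1).factorial + (t + 1).factorial = (k + 1) * (t + 1).factorial := by
                ring
              rwa [heq] at h
end
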